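/- arXiv:q-alg/9708026 — 9 statements merged into one kernel-verified Lean document; each statement's English description precedes it below -/
import Mathlib

section
/- Let q be a real number with 0 < q < 1, n a natural number, and A an associative unital ℂ-algebra containing elements z_0,…,z_n, ẑ_0,…,ẑ_n, c satisfying: z_i z_j = q z_j z_i for i<j; ẑ_i ẑ_j = q^{-1} ẑ_j ẑ_i for i<j; z_i ẑ_j = q ẑ_j z_i for i≠j; z_i ẑ_i − ẑ_i z_i = (q^{-2}−1)(Σ_{k>i} z_k ẑ_k + q·c) for every i; z_i c = q² c z_i and ẑ_i c = q^{-2} c ẑ_i for every i. For i = 0,…,n+1 set x_i = Σ_{k≥i} z_k ẑ_k + q·c (so x_{n+1} = q·c). Then: (1) x_i x_j = x_j x_i for all i, j; (2) z_i x_j = q² x_j z_i and ẑ_i x_j = q^{-2} x_j ẑ_i whenever i < j; (3) z_i x_j = x_j z_i and ẑ_i x_j = x_j ẑ_i whenever i ≥ j; (4) the element d = q·x_0 commutes with every z_i, every ẑ_i, and with c. -/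
/-!
Every defining relation except the one for `z i * zh i - zh i * z i` says that two generators
commute up to a scalar, and such `q`-commutation is multiplicative and additive. Hence `z i`
and `zh i` `q^{±2}`-commute with every product `z k * zh k` (`k > i`), with `c`, and so with
`x_m` for `m > i`, while they commute with `z k * zh k` for `k < i`. For the diagonal case
write `x_i = z i * zh i + x_{i+1}`: the commutator relation contributes `(q⁻² - 1) x_{i+1}`,
which exactly cancels the defect of `z i` (resp. `zh i`) commuting past `x_{i+1}`.
The same scalars show `z k * zh k` commutes with `x_m` for `k < m`, and with `c`, which gives
the commutativity of the `x`'s and the centrality of `d`.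
-/

open Finset

section SkewCommutation

variable {R A : Type*} [CommSemiring R] [Semiring A] [Algebra R A]

def QCommute (r : R) (a b : A) : Prop :=
  a * b = r • (b * a)

namespace QCommute

variable {r s : R} {a b c : A}

theorem commute (h : QCommute r a b) (hr : r = 1) : Commute a b := by
  rwa [QCommute, hr, one_smul] at h

theorem mul_right (h₁ : QCommute r a b) (h₂ : QCommute s a c) : QCommute (r * s) a (b * c) := by
  rw [QCommute, ← mul_assoc, h₁, smul_mul_assoc, mul_assoc, h₂, mul_smul_comm, smul_smul,
    mul_assoc]

theorem mul_left (h₁ : QCommute r a c) (h₂ : QCommute s b c) : QCommute (r * s) (a * b) c := by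
  rw [QCommute, mul_assoc, h₂, mul_smul_comm, ← mul_assoc, h₁, smul_mul_assoc, smul_smul,
    mul_comm s, mul_assoc]

theorem add_right {b' : A} (h : QCommute r a b) (h' : QCommute r a b') :
    QCommute r a (b + b') := by
  rw [QCommute, mul_add, add_mul, smul_add, h, h']

theorem smul_right (h : QCommute r a b) (t : R) : QCommute r a (t • b) := by
  rw [QCommute, mul_smul_comm, h, smul_mul_assoc, smul_comm]

theorem sum_right {ι : Type*} (s : Finset ι) {b : ι → A} (h : ∀ i ∈ s, QCommute r a (b i)) :
    QCommute r a (∑ i ∈ s, b i) := by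
  rw [QCommute, mul_sum, sum_mul, smul_sum]
  exact sum_congr rfl h

theorem symm {K : Type*} [Field K] [Algebra K A] {r : K} (hr : r ≠ 0) (h : QCommute r a b) :
    QCommute r⁻¹ b a := by
  rw [QCommute, h, inv_smul_smul₀ hr]

end QCommute

end SkewCommutation

section SkewCommutationRing

variable {R A : Type*} [CommRing R] [Ring A] [Algebra R A]

theorem commute_left_mul_add_of_sub_eq_smul {r s : R} {a b X : A} (hX : QCommute r a X)
    (hab : a * b - b * a = s • X) (hrs : r * (1 + s) = 1) : Commute a (a * b + X) := by
  rw [Commute, SemiconjBy, ← sub_eq_zero]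
  calc a * (a * b + X) - (a * b + X) * a = a * (a * b - b * a) + (a * X - X * a) := by
        noncomm_ring
    _ = (r * (1 + s) - 1) • (X * a) := by
        rw [hab, mul_smul_comm, hX]; match_scalars; ring
    _ = 0 := by rw [hrs, sub_self, zero_smul]

theorem commute_right_mul_add_of_sub_eq_smul {r s : R} {a b X : A} (hX : QCommute r b X)
    (hab : a * b - b * a = s • X) (hrs : r = 1 + s) : Commute b (a * b + X) := by
  rw [Commute, SemiconjBy, ← sub_eq_zero]
  calc b * (a * b + X) - (a * b + X) * b = -((a * b - b * a) * b) + (b * X - X * b) := by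
        noncomm_ring
    _ = (r - (1 + s)) • (X * b) := by
        rw [hab, smul_mul_assoc, hX]; match_scalars; ring
    _ = 0 := by rw [hrs, sub_self, zero_smul]

end SkewCommutationRing

section QuantumProjectiveSpace

variable {K A : Type*} [Field K] [Ring A] [Algebra K A] {n : ℕ}

/-- The paper's `x_m`, indexed by `m : ℕ`, so that `x_m = q • c` for every `m > n`. -/
def xSum (q : K) (z zh : Fin (n + 1) → A) (c : A) (m : ℕ) : A :=
  (∑ k ∈ univ.filter (fun k : Fin (n + 1) => m ≤ (k : ℕ)), z k * zh k) + q • c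

variable {q : K} {z zh : Fin (n + 1) → A} {c : A}

theorem xSum_eq_sum_add_xSum {a b : ℕ} (h : a ≤ b) :
    xSum q z zh c a =
      (∑ k ∈ univ.filter (fun k : Fin (n + 1) => a ≤ (k : ℕ) ∧ (k : ℕ) < b), z k * zh k) +
        xSum q z zh c b := by
  rw [xSum, xSum, ← add_assoc, ← sum_filter_add_sum_filter_not _ (fun k : Fin (n + 1) => k < b),
    filter_filter, filter_filter]
  congr 3
  ext k
  simp only [mem_filter, mem_univ, true_and]
  omega

theorem xSum_eq_mul_add_xSum_succ (i : Fin (n + 1)) :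
    xSum q z zh c i = z i * zh i + xSum q z zh c (i + 1) := by
  have h : univ.filter (fun k : Fin (n + 1) => (i : ℕ) ≤ k) =
      insert i (univ.filter fun k : Fin (n + 1) => (i : ℕ) + 1 ≤ k) := by
    ext k
    simp only [mem_filter, mem_univ, true_and, mem_insert, Fin.ext_iff]
    omega
  rw [xSum, xSum, h, sum_insert (by simp), add_assoc]

structure QuantumProjectiveRelations (q : K) (z zh : Fin (n + 1) → A) (c : A) : Prop where
  q_ne_zero : q ≠ 0
  z_z : ∀ i j, i < j → QCommute q (z i) (z j)
  zh_zh : ∀ i j, i < j → QCommute q⁻¹ (zh i) (zh j)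
  z_zh : ∀ i j, i ≠ j → QCommute q (z i) (zh j)
  z_zh_self : ∀ i, z i * zh i - zh i * z i = ((q ^ 2)⁻¹ - 1) • xSum q z zh c (i + 1)
  z_c : ∀ i, QCommute (q ^ 2) (z i) c
  zh_c : ∀ i, QCommute (q ^ 2)⁻¹ (zh i) c

namespace QuantumProjectiveRelations

variable {i k : Fin (n + 1)} {m : ℕ}

theorem qCommute_z_zzh_of_lt (R : QuantumProjectiveRelations q z zh c) (h : i < k) :
    QCommute (q ^ 2) (z i) (z k * zh k) := by
  rw [sq]
  exact (R.z_z i k h).mul_right (R.z_zh i k h.ne)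

theorem qCommute_zh_zzh_of_lt (R : QuantumProjectiveRelations q z zh c) (h : i < k) :
    QCommute (q ^ 2)⁻¹ (zh i) (z k * zh k) := by
  rw [sq, mul_inv]
  exact ((R.z_zh k i h.ne').symm R.q_ne_zero).mul_right (R.zh_zh i k h)

theorem commute_z_zzh_of_lt (R : QuantumProjectiveRelations q z zh c) (h : k < i) :
    Commute (z i) (z k * zh k) :=
  (((R.z_z k i h).symm R.q_ne_zero).mul_right (R.z_zh i k h.ne')).commute
    (inv_mul_cancel₀ R.q_ne_zero)

theorem commute_zh_zzh_of_lt (R : QuantumProjectiveRelations q z zh c) (h : k < i) :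
    Commute (zh i) (z k * zh k) :=
  (((R.z_zh k i h.ne).symm R.q_ne_zero).mul_right
    ((R.zh_zh k i h).symm (inv_ne_zero R.q_ne_zero))).commute
    (by rw [inv_inv, inv_mul_cancel₀ R.q_ne_zero])

theorem commute_zzh_c (R : QuantumProjectiveRelations q z zh c) (k : Fin (n + 1)) :
    Commute (z k * zh k) c :=
  ((R.z_c k).mul_left (R.zh_c k)).commute (mul_inv_cancel₀ (pow_ne_zero 2 R.q_ne_zero))

theorem qCommute_z_xSum (R : QuantumProjectiveRelations q z zh c) (h : (i : ℕ) < m) :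
    QCommute (q ^ 2) (z i) (xSum q z zh c m) :=
  (QCommute.sum_right _ fun _ hk => R.qCommute_z_zzh_of_lt (h.trans_le (mem_filter.1 hk).2)).add_right
    ((R.z_c i).smul_right q)

theorem qCommute_zh_xSum (R : QuantumProjectiveRelations q z zh c) (h : (i : ℕ) < m) :
    QCommute (q ^ 2)⁻¹ (zh i) (xSum q z zh c m) :=
  (QCommute.sum_right _ fun _ hk => R.qCommute_zh_zzh_of_lt (h.trans_le (mem_filter.1 hk).2)).add_right
    ((R.zh_c i).smul_right q)

theorem commute_xSum_c (R : QuantumProjectiveRelations q z zh c) (m : ℕ) :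
    Commute (xSum q z zh c m) c :=
  (Commute.sum_left _ _ _ fun k _ => R.commute_zzh_c k).add_left ((Commute.refl c).smul_left q)

theorem commute_zzh_xSum (R : QuantumProjectiveRelations q z zh c) (h : (k : ℕ) < m) :
    Commute (z k * zh k) (xSum q z zh c m) :=
  ((R.qCommute_z_xSum h).mul_left (R.qCommute_zh_xSum h)).commute
    (mul_inv_cancel₀ (pow_ne_zero 2 R.q_ne_zero))

theorem commute_xSum_xSum (R : QuantumProjectiveRelations q z zh c) (a b : ℕ) :
    Commute (xSum q z zh c a) (xSum q z zh c b) := by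
  wlog h : a ≤ b
  · exact (this R b a (le_of_not_ge h)).symm
  rw [xSum_eq_sum_add_xSum h]
  exact (Commute.sum_left _ _ _ fun k hk => R.commute_zzh_xSum (mem_filter.1 hk).2.2).add_left
    (Commute.refl _)

theorem commute_z_xSum_self (R : QuantumProjectiveRelations q z zh c) (i : Fin (n + 1)) :
    Commute (z i) (xSum q z zh c i) := by
  rw [xSum_eq_mul_add_xSum_succ]
  exact commute_left_mul_add_of_sub_eq_smul (R.qCommute_z_xSum (Nat.lt_succ_self _))
    (R.z_zh_self i) (by field_simp [R.q_ne_zero]; ring)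

theorem commute_zh_xSum_self (R : QuantumProjectiveRelations q z zh c) (i : Fin (n + 1)) :
    Commute (zh i) (xSum q z zh c i) := by
  rw [xSum_eq_mul_add_xSum_succ]
  exact commute_right_mul_add_of_sub_eq_smul (R.qCommute_zh_xSum (Nat.lt_succ_self _))
    (R.z_zh_self i) (by ring)

theorem commute_z_xSum_of_le (R : QuantumProjectiveRelations q z zh c) (h : m ≤ i) :
    Commute (z i) (xSum q z zh c m) := by
  rw [xSum_eq_sum_add_xSum h]
  exact (Commute.sum_right _ _ _ fun k hk => R.commute_z_zzh_of_lt (mem_filter.1 hk).2.2).add_right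
    (R.commute_z_xSum_self i)

theorem commute_zh_xSum_of_le (R : QuantumProjectiveRelations q z zh c) (h : m ≤ i) :
    Commute (zh i) (xSum q z zh c m) := by
  rw [xSum_eq_sum_add_xSum h]
  exact (Commute.sum_right _ _ _ fun k hk => R.commute_zh_zzh_of_lt (mem_filter.1 hk).2.2).add_right
    (R.commute_zh_xSum_self i)

end QuantumProjectiveRelations

end QuantumProjectiveSpace

theorem quantum_flag_x_relations_general
    (q : ℝ) (hq0 : 0 < q) (n : ℕ)
    (A : Type*) [Ring A] [Algebra ℂ A]
    (z zh : Fin (n + 1) → A) (c : A)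
    (hzz : ∀ i j : Fin (n + 1), (i : ℕ) < (j : ℕ) →
      z i * z j = (q : ℂ) • (z j * z i))
    (hzhzh : ∀ i j : Fin (n + 1), (i : ℕ) < (j : ℕ) →
      zh i * zh j = ((q : ℂ))⁻¹ • (zh j * zh i))
    (hzzh : ∀ i j : Fin (n + 1), i ≠ j →
      z i * zh j = (q : ℂ) • (zh j * z i))
    (hcom : ∀ i : Fin (n + 1),
      z i * zh i - zh i * z i =
        ((q : ℂ) ^ (-2 : ℤ) - 1) •
          ((∑ k ∈ Finset.univ.filter (fun k : Fin (n + 1) => (i : ℕ) < (k : ℕ)),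
              z k * zh k) + (q : ℂ) • c))
    (hzc : ∀ i : Fin (n + 1), z i * c = ((q : ℂ) ^ 2) • (c * z i))
    (hzhc : ∀ i : Fin (n + 1), zh i * c = ((q : ℂ) ^ 2)⁻¹ • (c * zh i))
    (x : Fin (n + 2) → A)
    (hx : ∀ i : Fin (n + 2),
      x i = (∑ k ∈ Finset.univ.filter (fun k : Fin (n + 1) => (i : ℕ) ≤ (k : ℕ)),
              z k * zh k) + (q : ℂ) • c)
    (d : A) (hd : d = (q : ℂ) • x 0) :
    (∀ i j : Fin (n + 2), x i * x j = x j * x i) ∧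
    (∀ (i : Fin (n + 1)) (j : Fin (n + 2)), (i : ℕ) < (j : ℕ) →
      z i * x j = ((q : ℂ) ^ 2) • (x j * z i) ∧
      zh i * x j = ((q : ℂ) ^ 2)⁻¹ • (x j * zh i)) ∧
    (∀ (i : Fin (n + 1)) (j : Fin (n + 2)), (j : ℕ) ≤ (i : ℕ) →
      z i * x j = x j * z i ∧ zh i * x j = x j * zh i) ∧
    (∀ i : Fin (n + 1), d * z i = z i * d) ∧
    (∀ i : Fin (n + 1), d * zh i = zh i * d) ∧
    d * c = c * d := by
  have R : QuantumProjectiveRelations (q : ℂ) z zh c :=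
    { q_ne_zero := by exact_mod_cast hq0.ne'
      z_z := hzz
      zh_zh := hzhzh
      z_zh := hzzh
      -- `rfl` works because `(i : ℕ) < k` unfolds to `(i : ℕ) + 1 ≤ k`
      z_zh_self := fun i => by rw [hcom i, zpow_neg, zpow_ofNat]; rfl
      z_c := hzc
      zh_c := hzhc }
  have hx' : ∀ j : Fin (n + 2), x j = xSum (q : ℂ) z zh c j := hx
  have hd' : d = (q : ℂ) • xSum (q : ℂ) z zh c 0 := by rw [hd, hx']; rfl
  simp only [hx', hd']
  refine ⟨fun i j => R.commute_xSum_xSum i j, fun i j hij => ⟨R.qCommute_z_xSum hij,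
    R.qCommute_zh_xSum hij⟩, fun i j hji => ⟨R.commute_z_xSum_of_le hji,
    R.commute_zh_xSum_of_le hji⟩, fun i => ?_, fun i => ?_, ?_⟩
  · exact (R.commute_z_xSum_of_le i.val.zero_le).symm.smul_left _
  · exact (R.commute_zh_xSum_of_le i.val.zero_le).symm.smul_left _
  · exact (R.commute_xSum_c 0).smul_left _

/-- commutation properties of the elements
`x i = ∑_{k ≥ i} z k * ẑ k + q • c` in the quantum algebra of homogeneous
polynomial functions on a family of quantum projective spaces, and centrality
of `d = q • x 0`. -/
theorem quantum_flag_x_relations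
    (q : ℝ) (hq0 : 0 < q) (hq1 : q < 1) (n : ℕ)
    (A : Type*) [Ring A] [Algebra ℂ A]
    (z zh : Fin (n + 1) → A) (c : A)
    (hzz : ∀ i j : Fin (n + 1), (i : ℕ) < (j : ℕ) →
      z i * z j = (q : ℂ) • (z j * z i))
    (hzhzh : ∀ i j : Fin (n + 1), (i : ℕ) < (j : ℕ) →
      zh i * zh j = ((q : ℂ))⁻¹ • (zh j * zh i))
    (hzzh : ∀ i j : Fin (n + 1), i ≠ j →
      z i * zh j = (q : ℂ) • (zh j * z i))
    (hcom : ∀ i : Fin (n + 1),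
      z i * zh i - zh i * z i =
        ((q : ℂ) ^ (-2 : ℤ) - 1) •
          ((∑ k ∈ Finset.univ.filter (fun k : Fin (n + 1) => (i : ℕ) < (k : ℕ)),
              z k * zh k) + (q : ℂ) • c))
    (hzc : ∀ i : Fin (n + 1), z i * c = ((q : ℂ) ^ 2) • (c * z i))
    (hzhc : ∀ i : Fin (n + 1), zh i * c = ((q : ℂ) ^ 2)⁻¹ • (c * zh i))
    (x : Fin (n + 2) → A)
    (hx : ∀ i : Fin (n + 2),
      x i = (∑ k ∈ Finset.univ.filter (fun k : Fin (n + 1) => (i : ℕ) ≤ (k : ℕ)),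
              z k * zh k) + (q : ℂ) • c)
    (d : A) (hd : d = (q : ℂ) • x 0) :
    (∀ i j : Fin (n + 2), x i * x j = x j * x i) ∧
    (∀ (i : Fin (n + 1)) (j : Fin (n + 2)), (i : ℕ) < (j : ℕ) →
      z i * x j = ((q : ℂ) ^ 2) • (x j * z i) ∧
      zh i * x j = ((q : ℂ) ^ 2)⁻¹ • (x j * zh i)) ∧
    (∀ (i : Fin (n + 1)) (j : Fin (n + 2)), (j : ℕ) ≤ (i : ℕ) →
      z i * x j = x j * z i ∧ zh i * x j = x j * zh i) ∧
    (∀ i : Fin (n + 1), d * z i = z i * d) ∧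
    (∀ i : Fin (n + 1), d * zh i = zh i * d) ∧
    d * c = c * d :=
  quantum_flag_x_relations_general q hq0 n A z zh c hzz hzhzh hzzh hcom hzc hzhc x hx d hd
end

section
/- Let q be a real number with 0 < q < 1 and A an associative unital ℂ-algebra containing elements z_0, z_1, ẑ_0, ẑ_1, c satisfying: z_0 z_1 = q z_1 z_0; ẑ_0 ẑ_1 = q^{-1} ẑ_1 ẑ_0; z_0 ẑ_1 = q ẑ_1 z_0; z_1 ẑ_0 = q ẑ_0 z_1; z_0 ẑ_0 − ẑ_0 z_0 = (q^{-2}−1)(z_1 ẑ_1 + q·c); z_1 ẑ_1 − ẑ_1 z_1 = (q^{-2}−1)·q·c; z_i c = q² c z_i and ẑ_i c = q^{-2} c ẑ_i for i = 0,1. Define x = z_1 ẑ_1 + q·c, y = z_0 ẑ_1, ŷ = z_1 ẑ_0, and d = q(z_0 ẑ_0 + z_1 ẑ_1 + q·c). Then: y x = q² x y; ŷ x = q^{-2} x ŷ; ŷ y = −(q^{-1}x − c)(q^{-1}x − d); y ŷ = −(q x − c)(q x − d); and both c and d commute with x, y and ŷ. -/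
section QuantumSphereAux
variable {A : Type*} [Ring A] [Algebra ℂ A]

private lemma qsw (a b b' a' : A) (s : ℂ) (h : a * b = s • (b' * a')) (w : A) :
    a * (b * w) = s • (b' * (a' * w)) := by
  rw [← mul_assoc, h, smul_mul_assoc, mul_assoc]

private lemma qsw' (a b p r : A) (s : ℂ) (h : a * b = b * a - s • p - r) (w : A) :
    a * (b * w) = b * (a * w) - s • (p * w) - r * w := by
  rw [← mul_assoc, h, sub_mul, sub_mul, smul_mul_assoc, mul_assoc]

end QuantumSphereAux

set_option maxHeartbeats 2000000

/-- the relations satisfied by `x = z₁ẑ₁ + q•c`, `y = z₀ẑ₁`,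
`ŷ = z₁ẑ₀` and `d = q(z₀ẑ₀ + z₁ẑ₁ + q•c)` in the `n = 1` quantum algebra of
homogeneous polynomial functions on a family of quantum projective lines. -/
theorem quantum_sphere_xy_relations
    (q : ℝ) (hq0 : 0 < q) (hq1 : q < 1)
    (A : Type*) [Ring A] [Algebra ℂ A]
    (z0 z1 zh0 zh1 c : A)
    (h1 : z0 * z1 = (q : ℂ) • (z1 * z0))
    (h2 : zh0 * zh1 = ((q : ℂ))⁻¹ • (zh1 * zh0))
    (h3 : z0 * zh1 = (q : ℂ) • (zh1 * z0))
    (h4 : z1 * zh0 = (q : ℂ) • (zh0 * z1))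
    (h5 : z0 * zh0 - zh0 * z0 = ((q : ℂ) ^ (-2 : ℤ) - 1) • (z1 * zh1 + (q : ℂ) • c))
    (h6 : z1 * zh1 - zh1 * z1 = ((q : ℂ) ^ (-2 : ℤ) - 1) • ((q : ℂ) • c))
    (h7 : z0 * c = ((q : ℂ) ^ 2) • (c * z0))
    (h8 : z1 * c = ((q : ℂ) ^ 2) • (c * z1))
    (h9 : zh0 * c = ((q : ℂ) ^ 2)⁻¹ • (c * zh0))
    (h10 : zh1 * c = ((q : ℂ) ^ 2)⁻¹ • (c * zh1))
    (x y yh d : A)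
    (hx : x = z1 * zh1 + (q : ℂ) • c)
    (hy : y = z0 * zh1)
    (hyh : yh = z1 * zh0)
    (hd : d = (q : ℂ) • (z0 * zh0 + z1 * zh1 + (q : ℂ) • c)) :
    y * x = ((q : ℂ) ^ 2) • (x * y) ∧
    yh * x = ((q : ℂ) ^ 2)⁻¹ • (x * yh) ∧
    yh * y = -(((q : ℂ)⁻¹ • x - c) * ((q : ℂ)⁻¹ • x - d)) ∧
    y * yh = -(((q : ℂ) • x - c) * ((q : ℂ) • x - d)) ∧
    (c * x = x * c ∧ c * y = y * c ∧ c * yh = yh * c) ∧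
    (d * x = x * d ∧ d * y = y * d ∧ d * yh = yh * d) := by
  have ht : (q : ℂ) ≠ 0 := by exact_mod_cast hq0.ne'
  have ht2 : ((q:ℂ)^2) ≠ 0 := pow_ne_zero 2 ht
  have hqq : (q:ℂ) * ((q:ℂ))⁻¹ = 1 := mul_inv_cancel₀ ht
  have hz2 : ((q:ℂ)^(-2:ℤ)) = ((q:ℂ)⁻¹)^2 := by
    rw [inv_pow, ← zpow_natCast, ← zpow_neg]; norm_num
  have hqi : ((q:ℂ)^2)⁻¹ = (q:ℂ)⁻¹ * (q:ℂ)⁻¹ := by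
    rw [sq, mul_inv]
  have e1 : z1 * z0 = ((q : ℂ))⁻¹ • (z0 * z1) := by rw [h1, inv_smul_smul₀ ht]
  have e2 : zh1 * zh0 = (q : ℂ) • (zh0 * zh1) := by rw [h2, smul_inv_smul₀ ht]
  have e3 : zh1 * z0 = ((q : ℂ))⁻¹ • (z0 * zh1) := by rw [h3, inv_smul_smul₀ ht]
  have e4 : zh0 * z1 = ((q : ℂ))⁻¹ • (z1 * zh0) := by rw [h4, inv_smul_smul₀ ht]
  have e5 : zh0 * z0 = z0 * zh0 - (((q : ℂ) ^ (-2 : ℤ) - 1)) • (z1 * zh1)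
      - (((q : ℂ) ^ (-2 : ℤ) - 1) * q) • c := by
    rw [sub_sub, mul_smul, ← smul_add, ← h5]
    abel
  have e6 : zh1 * z1 = z1 * zh1 - (((q : ℂ) ^ (-2 : ℤ) - 1) * q) • c - (0:ℂ) • c := by
    rw [zero_smul, sub_zero, mul_smul, ← h6]; abel
  have e7 : c * z0 = ((q : ℂ) ^ 2)⁻¹ • (z0 * c) := by rw [h7, inv_smul_smul₀ ht2]
  have e8 : c * z1 = ((q : ℂ) ^ 2)⁻¹ • (z1 * c) := by rw [h8, inv_smul_smul₀ ht2]
  have e9 : c * zh0 = ((q : ℂ) ^ 2) • (zh0 * c) := by rw [h9, smul_inv_smul₀ ht2]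
  have e10 : c * zh1 = ((q : ℂ) ^ 2) • (zh1 * c) := by rw [h10, smul_inv_smul₀ ht2]
  have g1 := qsw _ _ _ _ _ e1
  have g2 := qsw _ _ _ _ _ e2
  have g3 := qsw _ _ _ _ _ e3
  have g4 := qsw _ _ _ _ _ e4
  have g5 := qsw' _ _ _ _ _ e5
  have g6 := qsw' _ _ _ _ _ e6
  have g7 := qsw _ _ _ _ _ e7
  have g8 := qsw _ _ _ _ _ e8
  have g9 := qsw _ _ _ _ _ e9
  have g10 := qsw _ _ _ _ _ e10
  subst hx hy hyh hd
  refine ⟨?_, ?_, ?_, ?_, ⟨?_, ?_, ?_⟩, ⟨?_, ?_, ?_⟩⟩ <;>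
  · simp only [mul_add, add_mul, mul_sub, sub_mul, smul_add, smul_sub, smul_smul,
      smul_mul_assoc, mul_smul_comm, mul_assoc, zero_smul, sub_zero, zero_mul, mul_zero,
      add_zero, zero_add, neg_mul, mul_neg, neg_neg, neg_add, neg_sub,
      e1, e2, e3, e4, e5, e6, e7, e8, e9, e10, g1, g2, g3, g4, g5, g6, g7, g8, g9, g10]
    match_scalars
    all_goals try (simp only [hz2])
    all_goals (first
      | ring1
      | (linear_combination ((-1) + -(q:ℂ)*(q:ℂ)⁻¹) * hqq)
      | (linear_combination ((-1)) * hqq)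
      | (linear_combination ((1) + (q:ℂ)*(q:ℂ)⁻¹) * hqq + ((q:ℂ)^2) * hqi)
      | (linear_combination ((q:ℂ)*(q:ℂ)⁻¹ + -(q:ℂ)^2) * hqq)
      | (linear_combination ((q:ℂ)*(q:ℂ)⁻¹) * hqq)
      | (linear_combination ((q:ℂ)^2 + (q:ℂ)^3*(q:ℂ)⁻¹) * hqq + ((q:ℂ)^4) * hqi)
      | (linear_combination (-(q:ℂ) + -(q:ℂ)^2*(q:ℂ)⁻¹ + -(q:ℂ)^3 + -(q:ℂ)^4*(q:ℂ)⁻¹) * hqq + (-(q:ℂ)^5) * hqi)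
      | (linear_combination (-(q:ℂ) + -(q:ℂ)^2*(q:ℂ)⁻¹) * hqq)
      | (linear_combination (-(q:ℂ) + -(q:ℂ)^2*(q:ℂ)⁻¹) * hqq + (-(q:ℂ)^3 + -(q:ℂ)^3*((q:ℂ)^2)⁻¹) * hqi)
      | (linear_combination (-(q:ℂ)) * hqq)
      | (linear_combination (-(q:ℂ)*((q:ℂ)⁻¹)^2 + (q:ℂ)^2*(q:ℂ)⁻¹ + -(q:ℂ)^3) * hqq + (-(q:ℂ)^2*(q:ℂ)⁻¹ + (q:ℂ)^3 + (q:ℂ)^3*((q:ℂ)⁻¹)^2 + -(q:ℂ)^4*(q:ℂ)⁻¹) * hqi)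
      | (linear_combination (-(q:ℂ)*(q:ℂ)⁻¹) * hqq)
      | (linear_combination (-(q:ℂ)^2 + -(q:ℂ)^3*(q:ℂ)⁻¹) * hqq + (-(q:ℂ)^4) * hqi)
      | (linear_combination (-(q:ℂ)^3 + -(q:ℂ)^4*(q:ℂ)⁻¹) * hqq + ((q:ℂ)^3 + -(q:ℂ)^5) * hqi)
      | (linear_combination (-(q:ℂ)^3*((q:ℂ)⁻¹)^2) * hqq + ((q:ℂ)^3 + -(q:ℂ)^4*(q:ℂ)⁻¹) * hqi)
      | (linear_combination (-(q:ℂ)⁻¹ + -(q:ℂ)*((q:ℂ)⁻¹)^2) * hqq)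
      | (linear_combination (-(q:ℂ)⁻¹) * hqq + (-(q:ℂ)) * hqi))
end

section
/- Let q be a real number with 0 < q < 1. On the ℂ-vector space of Laurent polynomials in one variable ζ over ℂ, define the ℂ-linear operators E, F, K, K' by their action on the monomials ζ^k (k ∈ ℤ): E(ζ^k) = −q·((1 − q^{2k})/(1 − q²))·ζ^{k+1}, F(ζ^k) = ((q^{-2k} − 1)/(q^{-2} − 1))·ζ^{k−1}, K(ζ^k) = q^{-2k}·ζ^k, K'(ζ^k) = q^{2k}·ζ^k. Then K∘K' = K'∘K = id, K∘E = q^{-2}·E∘K, K∘F = q²·F∘K, and E∘F − F∘E = (K − K')/(q^{-1} − q). -/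
/-! All four operators are weighted shifts of the monomial basis `T k`, so each relation can be
checked on monomials, where it becomes an identity between coefficients: `K` and `K'` are
diagonal with inverse eigenvalues `q^{∓2k}`; `E` and `F` shift the degree by `±1`, which
multiplies the `K`-eigenvalue by `q^{∓2}`; and `[E, F]` is diagonal, its eigenvalue on `T k`
being a rational function of `q` and `q^{2k}` that simplifies to `(q^{-2k} - q^{2k})/(q^{-1} - q)`. -/

open LaurentPolynomial

namespace LaurentPolynomial

variable {R : Type*}

theorem linearMap_ext_T [Semiring R] {M : Type*} [AddCommMonoid M] [Module R M]
    {f g : R[T;T⁻¹] →ₗ[R] M} (h : ∀ k : ℤ, f (T k) = g (T k)) : f = g :=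
  AddMonoidAlgebra.lhom_ext' fun k ↦ LinearMap.ext_ring (h k)

section CommSemiring

variable [CommSemiring R]

theorem comp_eq_id_of_apply_T {K K' : R[T;T⁻¹] →ₗ[R] R[T;T⁻¹]} {w w' : ℤ → R}
    (hK : ∀ k, K (T k) = w k • T k) (hK' : ∀ k, K' (T k) = w' k • T k)
    (hw : ∀ k, w k * w' k = 1) : K ∘ₗ K' = LinearMap.id :=
  linearMap_ext_T fun k ↦ by
    rw [LinearMap.comp_apply, hK', map_smul, hK, smul_smul, mul_comm, hw, one_smul,
      LinearMap.id_apply]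

theorem comp_eq_smul_comp_of_apply_T {K E : R[T;T⁻¹] →ₗ[R] R[T;T⁻¹]} {w e : ℤ → R}
    {s : ℤ → ℤ} {c : R} (hK : ∀ k, K (T k) = w k • T k) (hE : ∀ k, E (T k) = e k • T (s k))
    (hw : ∀ k, w (s k) = c * w k) : K ∘ₗ E = c • (E ∘ₗ K) :=
  linearMap_ext_T fun k ↦ by
    simp only [LinearMap.smul_apply, LinearMap.comp_apply, hK, hE, map_smul, smul_smul, hw]
    rw [mul_comm (e k), mul_assoc]

end CommSemiring

theorem commutator_apply_T [CommRing R] {E F : R[T;T⁻¹] →ₗ[R] R[T;T⁻¹]} {e f : ℤ → R}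
    (hE : ∀ k, E (T k) = e k • T (k + 1)) (hF : ∀ k, F (T k) = f k • T (k - 1)) (k : ℤ) :
    (E ∘ₗ F - F ∘ₗ E) (T k) = (f k * e (k - 1) - e k * f (k + 1)) • T k := by
  simp only [LinearMap.sub_apply, LinearMap.comp_apply, hE, hF, map_smul, smul_smul,
    sub_add_cancel, add_sub_cancel_right, sub_smul]

end LaurentPolynomial

section QCoefficients

variable {𝕜 : Type*} [Field 𝕜] {q : 𝕜}

theorem zpow_neg_two_mul_add_one (hq : q ≠ 0) (k : ℤ) :
    q ^ (-(2 * (k + 1))) = q ^ (-2 : ℤ) * q ^ (-(2 * k)) := by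
  rw [← zpow_add₀ hq]; ring_nf

theorem zpow_neg_two_mul_sub_one (hq : q ≠ 0) (k : ℤ) :
    q ^ (-(2 * (k - 1))) = q ^ 2 * q ^ (-(2 * k)) := by
  rw [← zpow_natCast, ← zpow_add₀ hq]; ring_nf

theorem uqsl2_commutator_coeff (hq : q ≠ 0) (hq2 : q ^ 2 ≠ 1) (k : ℤ) :
    (q ^ (-(2 * k)) - 1) / (q ^ (-2 : ℤ) - 1) * (-q * ((1 - q ^ (2 * (k - 1))) / (1 - q ^ 2)))
      - -q * ((1 - q ^ (2 * k)) / (1 - q ^ 2))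
        * ((q ^ (-(2 * (k + 1))) - 1) / (q ^ (-2 : ℤ) - 1))
      = (q⁻¹ - q)⁻¹ * (q ^ (-(2 * k)) - q ^ (2 * k)) := by
  rw [mul_sub_one, mul_add_one, zpow_sub₀ hq, zpow_neg, zpow_neg, zpow_neg, zpow_add₀ hq]
  have hx : q ^ (2 * k) ≠ 0 := zpow_ne_zero _ hq
  generalize q ^ (2 * k) = x at hx ⊢
  simp only [zpow_ofNat]
  field_simp
  ring

end QCoefficients

/-- the q-difference operators `E`, `F`, `K`, `K' = K⁻¹`, defined
on Laurent polynomials by their action on the monomials `ζ^k`, satisfy the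
defining relations of `U_q(sl(2))`. -/
theorem uqsl2_relations_on_laurent
    (q : ℝ) (hq0 : 0 < q) (hq1 : q < 1)
    (E F K K' : LaurentPolynomial ℂ →ₗ[ℂ] LaurentPolynomial ℂ)
    (hE : ∀ k : ℤ, E (T k) =
      (-(q : ℂ) * ((1 - (q : ℂ) ^ (2 * k)) / (1 - (q : ℂ) ^ 2))) • T (k + 1))
    (hF : ∀ k : ℤ, F (T k) =
      ((((q : ℂ) ^ (-(2 * k)) - 1)) / ((q : ℂ) ^ (-2 : ℤ) - 1)) • T (k - 1))
    (hK : ∀ k : ℤ, K (T k) = ((q : ℂ) ^ (-(2 * k))) • T k)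
    (hK' : ∀ k : ℤ, K' (T k) = ((q : ℂ) ^ (2 * k)) • T k) :
    K ∘ₗ K' = LinearMap.id ∧
    K' ∘ₗ K = LinearMap.id ∧
    K ∘ₗ E = ((q : ℂ) ^ (-2 : ℤ)) • (E ∘ₗ K) ∧
    K ∘ₗ F = ((q : ℂ) ^ 2) • (F ∘ₗ K) ∧
    E ∘ₗ F - F ∘ₗ E = (((q : ℂ))⁻¹ - (q : ℂ))⁻¹ • (K - K') := by
  have hq : (q : ℂ) ≠ 0 := mod_cast hq0.ne'
  have hq2 : (q : ℂ) ^ 2 ≠ 1 := mod_cast (pow_lt_one₀ hq0.le hq1 two_ne_zero).ne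
  refine ⟨comp_eq_id_of_apply_T hK hK' fun k ↦ zpow_neg_mul_zpow_self _ hq,
    comp_eq_id_of_apply_T hK' hK fun k ↦ (mul_comm _ _).trans (zpow_neg_mul_zpow_self _ hq),
    comp_eq_smul_comp_of_apply_T hK hE (zpow_neg_two_mul_add_one hq),
    comp_eq_smul_comp_of_apply_T hK hF (zpow_neg_two_mul_sub_one hq),
    linearMap_ext_T fun k ↦ ?_⟩
  rw [commutator_apply_T hE hF, LinearMap.smul_apply, LinearMap.sub_apply, hK, hK', ← sub_smul,
    smul_smul, uqsl2_commutator_coeff hq hq2]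
end

section
/- Let q be a real number with 0 < q < 1. On the ℂ-vector space of Laurent polynomials in one variable ζ over ℂ, define the ℂ-linear operators E, F, K, K' by their action on the monomials ζ^k (k ∈ ℤ): E(ζ^k) = −q·((1 − q^{2k})/(1 − q²))·ζ^{k+1}, F(ζ^k) = ((q^{-2k} − 1)/(q^{-2} − 1))·ζ^{k−1}, K(ζ^k) = q^{-2k}·ζ^k, K'(ζ^k) = q^{2k}·ζ^k. Then the operator (1/2)(E∘F + F∘E) + ((q^{-1} + q)/(2(q^{-1} − q)²))·(K − 2·id + K') is the zero operator. -/
open LaurentPolynomial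

/-!
Each of `E`, `F`, `K`, `K'` sends a monomial `T k` to a multiple of a monomial, and `E`, `F`
shift the degree by `+1`, `-1`, so the Casimir operator acts diagonally on the monomial basis.
Its eigenvalue on `T k` is a rational function of `q` and `x = q ^ (2 * k)` that vanishes
identically.
-/

theorem LaurentPolynomial.linearMap_ext {R M : Type*} [Semiring R] [AddCommMonoid M]
    [Module R M] {φ ψ : R[T;T⁻¹] →ₗ[R] M} (h : ∀ k, φ (T k) = ψ (T k)) : φ = ψ :=
  (AddMonoidAlgebra.basis ℤ R).ext h

section ShiftOperators

variable {R : Type*} [CommSemiring R] {E F : R[T;T⁻¹] →ₗ[R] R[T;T⁻¹]} {e f : ℤ → R}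

theorem LaurentPolynomial.comp_apply_T_of_raise_of_lower
    (hE : ∀ k, E (T k) = e k • T (k + 1)) (hF : ∀ k, F (T k) = f k • T (k - 1)) (k : ℤ) :
    (E ∘ₗ F) (T k) = (f k * e (k - 1)) • T k := by
  rw [LinearMap.comp_apply, hF, map_smul, hE, sub_add_cancel, smul_smul]

theorem LaurentPolynomial.comp_apply_T_of_lower_of_raise
    (hE : ∀ k, E (T k) = e k • T (k + 1)) (hF : ∀ k, F (T k) = f k • T (k - 1)) (k : ℤ) :
    (F ∘ₗ E) (T k) = (e k * f (k + 1)) • T k := by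
  rw [LinearMap.comp_apply, hE, map_smul, hF, add_sub_cancel_right, smul_smul]

end ShiftOperators

theorem LaurentPolynomial.casimir_apply_T {R : Type*} [Field R]
    {E F K K' : R[T;T⁻¹] →ₗ[R] R[T;T⁻¹]} {e f a b : ℤ → R}
    (hE : ∀ k, E (T k) = e k • T (k + 1)) (hF : ∀ k, F (T k) = f k • T (k - 1))
    (hK : ∀ k, K (T k) = a k • T k) (hK' : ∀ k, K' (T k) = b k • T k) (c : R) (k : ℤ) :
    ((1 / 2 : R) • (E ∘ₗ F + F ∘ₗ E) + c • (K - (2 : R) • LinearMap.id + K') :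
      R[T;T⁻¹] →ₗ[R] R[T;T⁻¹]) (T k) =
      ((1 / 2 : R) * (f k * e (k - 1) + e k * f (k + 1)) + c * (a k - 2 + b k)) • T k := by
  simp only [LinearMap.add_apply, LinearMap.smul_apply, LinearMap.sub_apply, LinearMap.id_apply,
    comp_apply_T_of_raise_of_lower hE hF, comp_apply_T_of_lower_of_raise hE hF, hK, hK']
  module

namespace Uqsl2

variable {K : Type*} [Field K]

def eCoeff (q : K) (k : ℤ) : K := -q * ((1 - q ^ (2 * k)) / (1 - q ^ 2))

def fCoeff (q : K) (k : ℤ) : K := (q ^ (-(2 * k)) - 1) / (q ^ (-2 : ℤ) - 1)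

theorem casimir_coeff_eq_zero {q : K} (hq : q ≠ 0) (hq2 : q ^ 2 ≠ 1) (k : ℤ) :
    (1 / 2 : K) * (fCoeff q k * eCoeff q (k - 1) + eCoeff q k * fCoeff q (k + 1)) +
      (q⁻¹ + q) / (2 * (q⁻¹ - q) ^ 2) * (q ^ (-(2 * k)) - 2 + q ^ (2 * k)) = 0 := by
  set x := q ^ (2 * k) with hx
  have hx0 : x ≠ 0 := zpow_ne_zero _ hq
  have hx_pred : q ^ (2 * (k - 1)) = x / q ^ 2 := by
    rw [show 2 * (k - 1) = 2 * k - 2 by ring, zpow_sub₀ hq]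
    norm_cast
  have hx_succ : q ^ (-(2 * (k + 1))) = (x * q ^ 2)⁻¹ := by
    rw [show -(2 * (k + 1)) = -(2 * k + 2) by ring, zpow_neg, zpow_add₀ hq]
    norm_cast
  simp only [eCoeff, fCoeff, hx_pred, hx_succ, zpow_neg, ← hx]
  field_simp
  ring

end Uqsl2

/-- the quantum quadratic Casimir element acts as zero in the
representation of `U_q(sl(2))` on Laurent polynomials by the q-difference
operators `E`, `F`, `K`, `K' = K⁻¹`. -/
theorem casimir_acts_trivially_on_laurent
    (q : ℝ) (hq0 : 0 < q) (hq1 : q < 1)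
    (E F K K' : LaurentPolynomial ℂ →ₗ[ℂ] LaurentPolynomial ℂ)
    (hE : ∀ k : ℤ, E (T k) =
      (-(q : ℂ) * ((1 - (q : ℂ) ^ (2 * k)) / (1 - (q : ℂ) ^ 2))) • T (k + 1))
    (hF : ∀ k : ℤ, F (T k) =
      ((((q : ℂ) ^ (-(2 * k)) - 1)) / ((q : ℂ) ^ (-2 : ℤ) - 1)) • T (k - 1))
    (hK : ∀ k : ℤ, K (T k) = ((q : ℂ) ^ (-(2 * k))) • T k)
    (hK' : ∀ k : ℤ, K' (T k) = ((q : ℂ) ^ (2 * k)) • T k) :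
    (1 / 2 : ℂ) • (E ∘ₗ F + F ∘ₗ E) +
      ((((q : ℂ))⁻¹ + (q : ℂ)) / (2 * (((q : ℂ))⁻¹ - (q : ℂ)) ^ 2)) •
        (K - (2 : ℂ) • LinearMap.id + K') = 0 := by
  have hq : (q : ℂ) ≠ 0 := by exact_mod_cast hq0.ne'
  have hq2 : (q : ℂ) ^ 2 ≠ 1 := by exact_mod_cast (pow_lt_one₀ hq0.le hq1 two_ne_zero).ne
  refine linearMap_ext fun k => ?_
  rw [casimir_apply_T (e := Uqsl2.eCoeff (q : ℂ)) (f := Uqsl2.fCoeff (q : ℂ)) hE hF hK hK',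
    Uqsl2.casimir_coeff_eq_zero hq hq2, zero_smul, LinearMap.zero_apply]
end

section
/- Let q be a real number with 0 < q < 1, ν₀ a nonzero real number, and c₀, d₀ complex numbers. On the ℂ-vector space of Laurent polynomials in one variable ζ over ℂ, define the ℂ-linear operators: X(ζ^k) = ν₀ q^{-2k} ζ^k for all k ∈ ℤ, Z = multiplication by ζ, Z' = multiplication by ζ^{-1}, Y = Z∘(q^{-1}X − c₀·id), and Ŷ = −Z'∘(qX − d₀·id). Then: Y∘X = q²·X∘Y; Ŷ∘X = q^{-2}·X∘Ŷ; Ŷ∘Y = −(q^{-1}X − c₀·id)∘(q^{-1}X − d₀·id); and Y∘Ŷ = −(qX − c₀·id)∘(qX − d₀·id). -/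
/-!
Multiplication `Z` by `ζ` is invertible with inverse `Z'` and `q`-commutes with `X`:
`Z X = q² X Z`, since `X` is diagonal with eigenvalue `ν₀ q^{-2k}` on `ζ^k` and `Z` raises `k`
by one. The four relations are formal consequences of these facts in any algebra; the key one is
`Z (q⁻¹X − c) = (qX − c) Z`, which gives `Ŷ Y = −Z'(qX − d₀) Z (q⁻¹X − c₀) = −(q⁻¹X − d₀)(q⁻¹X − c₀)`
and, after conjugating by `Z`, `(q⁻¹X − c₀) Z' = Z' (qX − c₀)` for `Y Ŷ`.
-/

open LaurentPolynomial

namespace LaurentPolynomial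

theorem linearMap_ext_s7 {R M : Type*} [CommSemiring R] [AddCommMonoid M] [Module R M]
    {f g : R[T;T⁻¹] →ₗ[R] M} (h : ∀ k : ℤ, f (T k) = g (T k)) : f = g := by
  refine AddMonoidAlgebra.lhom_ext' fun k => LinearMap.ext fun a => ?_
  have hs : (AddMonoidAlgebra.single k a : R[T;T⁻¹]) = a • T k := by
    rw [T, AddMonoidAlgebra.smul_single', mul_one]
  simp [AddMonoidAlgebra.lsingle, hs, h k]

theorem mulLeft_T_one_mul_eq_smul {R : Type*} [CommSemiring R] {X : Module.End R R[T;T⁻¹]}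
    {w : ℤ → R} (hX : ∀ k, X (T k) = w k • T k) {μ : R} (hw : ∀ k, w k = μ * w (k + 1)) :
    LinearMap.mulLeft R (T 1) * X = μ • (X * LinearMap.mulLeft R (T 1)) :=
  linearMap_ext_s7 fun k => by
    simp only [Module.End.mul_apply, LinearMap.smul_apply, LinearMap.mulLeft_apply, hX,
      ← T_add, add_comm 1 k, mul_smul_comm, smul_smul, hw k]

theorem mulLeft_T_mul_mulLeft_T_neg {R : Type*} [CommSemiring R] (n : ℤ) :
    LinearMap.mulLeft R (T n : R[T;T⁻¹]) * LinearMap.mulLeft R (T (-n)) = 1 := by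
  rw [Module.End.mul_eq_comp, ← LinearMap.mulLeft_mul, ← T_add, add_neg_cancel, T_zero,
    LinearMap.mulLeft_one, Module.End.one_eq_id]

end LaurentPolynomial

section QCommute

variable {K A : Type*} [Field K] [Ring A] [Algebra K A] {μ : K} {x z z' p : A}

theorem mul_mul_eq_smul_of_mul_eq_smul (hzx : z * x = μ • (x * z)) (hp : Commute x p) :
    z * p * x = μ • (x * (z * p)) := by
  rw [mul_assoc, ← hp.eq, ← mul_assoc, hzx, smul_mul_assoc, mul_assoc]

theorem mul_eq_inv_smul_of_mul_eq_smul (hμ : μ ≠ 0) (hzx : z * x = μ • (x * z))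
    (hzz' : z * z' = 1) (hz'z : z' * z = 1) : z' * x = μ⁻¹ • (x * z') := by
  have : z' * (z * x) * z' = μ • (z' * (x * z) * z') := by
    rw [hzx, mul_smul_comm, smul_mul_assoc]
  rw [← mul_assoc, hz'z, one_mul, mul_assoc, mul_assoc, hzz', mul_one] at this
  rw [this, smul_smul, inv_mul_cancel₀ hμ, one_smul]

variable {q : K}

theorem commute_self_affine (a c : K) : Commute x (a • x - c • 1) := by
  apply_rules [Commute.sub_right, Commute.smul_right, Commute.refl, Commute.one_right]

theorem commute_affine (a b c d : K) : Commute (a • x - c • 1) (b • x - d • 1) := by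
  apply_rules [Commute.sub_left, Commute.sub_right, Commute.smul_left, Commute.smul_right,
    Commute.refl, Commute.one_left, Commute.one_right]

theorem mul_affine_eq_affine_mul (hq : q ≠ 0) (hzx : z * x = q ^ 2 • (x * z)) (c : K) :
    z * (q⁻¹ • x - c • 1) = (q • x - c • 1) * z := by
  rw [mul_sub, sub_mul, mul_smul_comm, hzx, smul_smul, smul_mul_assoc, mul_smul_comm,
    smul_mul_assoc, mul_one, one_mul]
  congr 2
  field_simp

theorem affine_mul_eq_mul_affine (hq : q ≠ 0) (hzx : z * x = q ^ 2 • (x * z))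
    (hzz' : z * z' = 1) (hz'z : z' * z = 1) (c : K) :
    (q⁻¹ • x - c • 1) * z' = z' * (q • x - c • 1) :=
  calc (q⁻¹ • x - c • 1) * z' = z' * (z * (q⁻¹ • x - c • 1)) * z' := by
        rw [← mul_assoc z', hz'z, one_mul]
    _ = z' * (q • x - c • 1) := by
        rw [mul_affine_eq_affine_mul hq hzx, mul_assoc, mul_assoc, hzz', mul_one]

theorem inv_mul_affine_mul_mul_affine (hq : q ≠ 0) (hzx : z * x = q ^ 2 • (x * z))
    (hz'z : z' * z = 1) (c d : K) :
    z' * (q • x - d • 1) * (z * (q⁻¹ • x - c • 1)) =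
      (q⁻¹ • x - c • 1) * (q⁻¹ • x - d • 1) := by
  rw [mul_assoc, ← mul_assoc _ z, ← mul_affine_eq_affine_mul hq hzx, ← mul_assoc, ← mul_assoc,
    hz'z, one_mul, (commute_affine _ _ _ _).eq]

theorem mul_affine_mul_inv_mul_affine (hq : q ≠ 0) (hzx : z * x = q ^ 2 • (x * z))
    (hzz' : z * z' = 1) (hz'z : z' * z = 1) (c d : K) :
    z * (q⁻¹ • x - c • 1) * (z' * (q • x - d • 1)) = (q • x - c • 1) * (q • x - d • 1) := by
  rw [mul_assoc, ← mul_assoc _ z', affine_mul_eq_mul_affine hq hzx hzz' hz'z, ← mul_assoc,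
    ← mul_assoc, hzz', one_mul]

end QCommute

theorem quantum_hyperboloid_module_relations_general
    (q : ℝ) (hq0 : 0 < q)
    (ν₀ : ℝ) (c₀ d₀ : ℂ)
    (X Z Z' Y Yh : LaurentPolynomial ℂ →ₗ[ℂ] LaurentPolynomial ℂ)
    (hX : ∀ k : ℤ, X (T k) = ((ν₀ : ℂ) * (q : ℂ) ^ (-(2 * k))) • T k)
    (hZ : ∀ f : LaurentPolynomial ℂ, Z f = T 1 * f)
    (hZ' : ∀ f : LaurentPolynomial ℂ, Z' f = T (-1) * f)
    (hY : Y = Z ∘ₗ (((q : ℂ))⁻¹ • X - c₀ • LinearMap.id))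
    (hYh : Yh = -(Z' ∘ₗ ((q : ℂ) • X - d₀ • LinearMap.id))) :
    Y ∘ₗ X = ((q : ℂ) ^ 2) • (X ∘ₗ Y) ∧
    Yh ∘ₗ X = ((q : ℂ) ^ 2)⁻¹ • (X ∘ₗ Yh) ∧
    Yh ∘ₗ Y =
      -((((q : ℂ))⁻¹ • X - c₀ • LinearMap.id) ∘ₗ
        (((q : ℂ))⁻¹ • X - d₀ • LinearMap.id)) ∧
    Y ∘ₗ Yh =
      -(((q : ℂ) • X - c₀ • LinearMap.id) ∘ₗ
        ((q : ℂ) • X - d₀ • LinearMap.id)) := by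
  have hq : (q : ℂ) ≠ 0 := by exact_mod_cast hq0.ne'
  obtain rfl : Z = LinearMap.mulLeft ℂ (T 1) := LinearMap.ext hZ
  obtain rfl : Z' = LinearMap.mulLeft ℂ (T (-1)) := LinearMap.ext hZ'
  have hZX : LinearMap.mulLeft ℂ (T 1) * X = (q : ℂ) ^ 2 • (X * LinearMap.mulLeft ℂ (T 1)) :=
    mulLeft_T_one_mul_eq_smul hX fun k => by
      rw [show -(2 * (k + 1)) = -(2 * k) + (-2) by ring, zpow_add₀ hq]
      field_simp
  have hZZ' := mulLeft_T_mul_mulLeft_T_neg (R := ℂ) 1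
  have hZ'Z := neg_neg (1 : ℤ) ▸ mulLeft_T_mul_mulLeft_T_neg (R := ℂ) (-1)
  have hZ'X := mul_eq_inv_smul_of_mul_eq_smul (pow_ne_zero 2 hq) hZX hZZ' hZ'Z
  subst hY hYh
  simp only [LinearMap.neg_comp, LinearMap.comp_neg, smul_neg, neg_inj]
  simp only [← Module.End.mul_eq_comp, ← Module.End.one_eq_id]
  exact ⟨mul_mul_eq_smul_of_mul_eq_smul hZX (commute_self_affine _ _),
    mul_mul_eq_smul_of_mul_eq_smul hZ'X (commute_self_affine _ _),
    inv_mul_affine_mul_mul_affine hq hZX hZ'Z c₀ d₀,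
    mul_affine_mul_inv_mul_affine hq hZX hZZ' hZ'Z c₀ d₀⟩

/-- the operators `X`, `Y = Z∘(q⁻¹X − c₀)`, `Ŷ = −Z'∘(qX − d₀)` on
Laurent polynomials (with `Z`, `Z'` multiplication by `ζ`, `ζ⁻¹`) satisfy the
defining relations of the quantum algebra of functions on the quantum
hyperboloid `X_{c₀,d₀}`. -/
theorem quantum_hyperboloid_module_relations
    (q : ℝ) (hq0 : 0 < q) (hq1 : q < 1)
    (ν₀ : ℝ) (hν : ν₀ ≠ 0) (c₀ d₀ : ℂ)
    (X Z Z' Y Yh : LaurentPolynomial ℂ →ₗ[ℂ] LaurentPolynomial ℂ)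
    (hX : ∀ k : ℤ, X (T k) = ((ν₀ : ℂ) * (q : ℂ) ^ (-(2 * k))) • T k)
    (hZ : ∀ f : LaurentPolynomial ℂ, Z f = T 1 * f)
    (hZ' : ∀ f : LaurentPolynomial ℂ, Z' f = T (-1) * f)
    (hY : Y = Z ∘ₗ (((q : ℂ))⁻¹ • X - c₀ • LinearMap.id))
    (hYh : Yh = -(Z' ∘ₗ ((q : ℂ) • X - d₀ • LinearMap.id))) :
    Y ∘ₗ X = ((q : ℂ) ^ 2) • (X ∘ₗ Y) ∧
    Yh ∘ₗ X = ((q : ℂ) ^ 2)⁻¹ • (X ∘ₗ Yh) ∧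
    Yh ∘ₗ Y =
      -((((q : ℂ))⁻¹ • X - c₀ • LinearMap.id) ∘ₗ
        (((q : ℂ))⁻¹ • X - d₀ • LinearMap.id)) ∧
    Y ∘ₗ Yh =
      -(((q : ℂ) • X - c₀ • LinearMap.id) ∘ₗ
        ((q : ℂ) • X - d₀ • LinearMap.id)) :=
  quantum_hyperboloid_module_relations_general q hq0 ν₀ c₀ d₀ X Z Z' Y Yh hX hZ hZ' hY hYh
end

section
/- Let q be a real number with 0 < q < 1 and let c₀, d₀ be real numbers with 0 < c₀ ≤ d₀. Then there exists a real number ν₀ > 0 such that ν₀ q^{2k} ∉ [q c₀, q d₀] for every k ∈ ℤ if and only if d₀ < q^{-2} c₀. -/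
/-!
Put `r = q²`. The progression `ν rᵏ` meets every window `[r x, x)` with `x > 0`, so it cannot avoid
`[a, b]` when `a ≤ r b`. Conversely, when `r b < a` the gap between `b` and `a / r` is wider than one
step of the progression, and any `ν` inside it jumps over `[a, b]`: `ν rᵏ ≥ ν > b` for `k ≤ 0` and
`ν rᵏ ≤ ν r < a` for `k ≥ 1`.
-/

open Set

variable {K : Type*} [Field K] [LinearOrder K] [IsStrictOrderedRing K] {r ν a b : K}

theorem exists_mul_zpow_mem_Ico [Archimedean K] (hr0 : 0 < r) (hr1 : r < 1) (hν : 0 < ν) {x : K}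
    (hx : 0 < x) :
    ∃ k : ℤ, ν * r ^ k ∈ Ico (r * x) x := by
  obtain ⟨n, hlt, hle⟩ := exists_mem_Ioc_zpow (div_pos hx hν) ((one_lt_inv₀ hr0).2 hr1)
  refine ⟨-n, ?_, ?_⟩ <;> rw [zpow_neg, ← inv_zpow]
  · rw [zpow_add_one₀ (inv_ne_zero hr0.ne'), div_le_iff₀ hν] at hle
    calc r * x ≤ r * (r⁻¹ ^ n * r⁻¹ * ν) := mul_le_mul_of_nonneg_left hle hr0.le
      _ = ν * r⁻¹ ^ n := by field_simp
  · rwa [lt_div_iff₀ hν, mul_comm] at hlt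

theorem mul_zpow_notMem_Icc (hr0 : 0 < r) (hr1 : r < 1) (hν : 0 < ν) (hb : b < ν)
    (ha : ν * r < a) (k : ℤ) : ν * r ^ k ∉ Icc a b := by
  rintro ⟨hak, hkb⟩
  rcases le_or_gt k 0 with hk | hk
  · have : ν ≤ ν * r ^ k := le_mul_of_one_le_right hν.le (one_le_zpow_of_nonpos₀ hr0 hr1.le hk)
    linarith
  · have : r ^ k ≤ r ^ (1 : ℤ) := zpow_le_zpow_right_of_le_one₀ hr0 hr1.le hk
    have : ν * r ^ k ≤ ν * r := by simpa using mul_le_mul_of_nonneg_left this hν.le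
    linarith

theorem exists_mul_zpow_notMem_Icc_iff [Archimedean K] (hr0 : 0 < r) (hr1 : r < 1) (ha : 0 < a) :
    (∃ ν : K, 0 < ν ∧ ∀ k : ℤ, ν * r ^ k ∉ Icc a b) ↔ r * b < a := by
  constructor
  · rintro ⟨ν, hν, havoid⟩
    by_contra! hab
    have hb : 0 < b := pos_of_mul_pos_right (ha.trans_le hab) hr0.le
    obtain ⟨k, hlow, hhigh⟩ := exists_mul_zpow_mem_Ico hr0 hr1 hν hb
    exact havoid k ⟨hab.trans hlow, hhigh.le⟩
  · intro hab
    have hgap : max b 0 < a / r := max_lt ((lt_div_iff₀ hr0).2 (by linarith)) (div_pos ha hr0)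
    obtain ⟨ν, hν, hνa⟩ := exists_between hgap
    have hν0 : 0 < ν := (le_max_right b 0).trans_lt hν
    exact ⟨ν, hν0, mul_zpow_notMem_Icc hr0 hr1 hν0 ((le_max_left b 0).trans_lt hν)
      ((lt_div_iff₀ hr0).1 hνa)⟩

theorem tunnel_progression_exists_iff_general
    (q : ℝ) (hq0 : 0 < q) (hq1 : q < 1)
    (c₀ d₀ : ℝ) (hc : 0 < c₀) :
    (∃ ν₀ : ℝ, 0 < ν₀ ∧
        ∀ k : ℤ, ν₀ * q ^ (2 * k) ∉ Set.Icc (q * c₀) (q * d₀)) ↔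
      d₀ < q ^ (-2 : ℤ) * c₀ := by
  have hr0 : 0 < q ^ (2 : ℤ) := zpow_pos hq0 2
  have hr1 : q ^ (2 : ℤ) < 1 := zpow_lt_one₀ hq0 hq1 two_pos
  simp_rw [zpow_mul q 2]
  rw [exists_mul_zpow_notMem_Icc_iff hr0 hr1 (mul_pos hq0 hc), zpow_neg, lt_inv_mul_iff₀ hr0,
    mul_left_comm, mul_lt_mul_iff_right₀ hq0]

/-- the 'tunnel' phenomenon: there is a positive `ν₀` whose
geometric progression `{ν₀ q^{2k} : k ∈ ℤ}` avoids the closed interval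
`[qc₀, qd₀]` if and only if `d₀ < q⁻² c₀`. -/
theorem tunnel_progression_exists_iff
    (q : ℝ) (hq0 : 0 < q) (hq1 : q < 1)
    (c₀ d₀ : ℝ) (hc : 0 < c₀) (hcd : c₀ ≤ d₀) :
    (∃ ν₀ : ℝ, 0 < ν₀ ∧
        ∀ k : ℤ, ν₀ * q ^ (2 * k) ∉ Set.Icc (q * c₀) (q * d₀)) ↔
      d₀ < q ^ (-2 : ℤ) * c₀ :=
  tunnel_progression_exists_iff_general q hq0 hq1 c₀ d₀ hc
end

section
/- Let q be a real number with 0 < q < 1, let c₀, d₀ be complex numbers with c₀ d₀ = 1, and let A be an associative unital ℂ-algebra containing an invertible element x and elements y, ŷ satisfying: y x = q² x y; ŷ x = q^{-2} x ŷ; ŷ y = −(q^{-1}x − c₀)(q^{-1}x − d₀); y ŷ = −(q x − c₀)(q x − d₀). Set a = q^{1/2}/(q^{-1} − q), E = a·y, F = a·x^{-1}ŷ, K = x, K^{-1} = x^{-1}. Then (1/2)(E F + F E) + ((q^{-1} + q)/(2(q^{-1} − q)²))·(K − 2 + K^{-1}) = ((c₀ + d₀ − q − q^{-1})/(q^{-1}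 − q)²)·1_A. -/
/-!
Since `x` is invertible, the relation `y x = q² x y` gives `y x⁻¹ = q⁻² x⁻¹ y`, so both `E F` and
`F E` are `a²` times `x⁻¹` applied to one of the two quadratic relations `y ŷ`, `ŷ y`. Expanding
these with `c₀ d₀ = 1` turns `E F + F E` into a combination of `x`, `x⁻¹` and `1` whose `x`- and
`x⁻¹`-parts are exactly cancelled by the `K - 2 + K⁻¹` term, and `a² = q / (q⁻¹ - q)²`.
-/

section QuadraticRelations

variable {R A : Type*} [CommRing R] [Ring A] [Algebra R A]

theorem smul_sub_smul_one_mul_smul_sub_smul_one (t c d : R) (x : A) :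
    (t • x - c • 1) * (t • x - d • 1) = t ^ 2 • (x * x) - (t * (c + d)) • x + (c * d) • (1 : A) := by
  simp only [mul_sub, sub_mul, smul_mul_smul_comm, mul_one, one_mul]
  module

theorem mul_smul_sub_smul_one_mul_smul_sub_smul_one {x x' : A} (hx'x : x' * x = 1) (t c d : R) :
    x' * ((t • x - c • 1) * (t • x - d • 1)) = t ^ 2 • x - (t * (c + d)) • 1 + (c * d) • x' := by
  rw [smul_sub_smul_one_mul_smul_sub_smul_one]
  simp only [mul_add, mul_sub, mul_smul_comm, ← mul_assoc, hx'x, one_mul, mul_one]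

theorem mul_eq_smul_mul_of_mul_eq_smul_mul {x x' y : A} (hxx' : x * x' = 1) (hx'x : x' * x = 1)
    {s : R} (h : y * x = s • (x * y)) : x' * y = s • (y * x') :=
  calc x' * y = x' * (y * x) * x' := by simp only [mul_assoc, hxx', mul_one]
    _ = s • (y * x') := by simp only [h, mul_smul_comm, smul_mul_assoc, ← mul_assoc, hx'x, one_mul]

end QuadraticRelations

theorem mul_inv_mul_add_inv_mul_mul_of_hyperboloid {𝕜 A : Type*} [Field 𝕜] [Ring A] [Algebra 𝕜 A]
    {t : 𝕜} (ht : t ≠ 0) (c d : 𝕜) {x x' y yh : A} (hxx' : x * x' = 1) (hx'x : x' * x = 1)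
    (hyx : y * x = t ^ 2 • (x * y))
    (hyhy : yh * y = -((t⁻¹ • x - c • 1) * (t⁻¹ • x - d • 1)))
    (hyyh : y * yh = -((t • x - c • 1) * (t • x - d • 1))) :
    y * (x' * yh) + x' * yh * y = (2 * t⁻¹ * (c + d)) • 1 - (1 + t⁻¹ ^ 2) • (x + (c * d) • x') := by
  have hx'y := mul_eq_smul_mul_of_mul_eq_smul_mul hxx' hx'x hyx
  have hyx'yh : y * (x' * yh) = (t ^ 2)⁻¹ • (x' * (y * yh)) := by
    rw [← mul_assoc, ← mul_assoc, hx'y, smul_mul_assoc, smul_smul,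
      inv_mul_cancel₀ (pow_ne_zero 2 ht), one_smul]
  rw [hyx'yh, mul_assoc, hyyh, hyhy, mul_neg, mul_neg,
    mul_smul_sub_smul_one_mul_smul_sub_smul_one hx'x, mul_smul_sub_smul_one_mul_smul_sub_smul_one hx'x]
  match_scalars <;> field_simp <;> ring

theorem quantum_moment_map_casimir_general
    (q : ℝ) (hq0 : 0 < q)
    (c₀ d₀ : ℂ) (hcd : c₀ * d₀ = 1)
    (A : Type*) [Ring A] [Algebra ℂ A]
    (x x' y yh : A)
    (hxx' : x * x' = 1) (hx'x : x' * x = 1)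
    (h1 : y * x = ((q : ℂ) ^ 2) • (x * y))
    (h3 : yh * y = -((((q : ℂ))⁻¹ • x - c₀ • (1 : A)) * (((q : ℂ))⁻¹ • x - d₀ • (1 : A))))
    (h4 : y * yh = -(((q : ℂ) • x - c₀ • (1 : A)) * ((q : ℂ) • x - d₀ • (1 : A))))
    (a : ℂ) (ha : a = (Real.sqrt q : ℂ) / (((q : ℂ))⁻¹ - (q : ℂ)))
    (E F : A) (hE : E = a • y) (hF : F = a • (x' * yh)) :
    (1 / 2 : ℂ) • (E * F + F * E) +
        ((((q : ℂ))⁻¹ + (q : ℂ)) / (2 * (((q : ℂ))⁻¹ - (q : ℂ)) ^ 2)) •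
          (x - (2 : ℂ) • (1 : A) + x') =
      ((c₀ + d₀ - (q : ℂ) - ((q : ℂ))⁻¹) / ((((q : ℂ))⁻¹ - (q : ℂ)) ^ 2)) • (1 : A) := by
  have hq : (q : ℂ) ≠ 0 := Complex.ofReal_ne_zero.mpr hq0.ne'
  have ha2 : a * a = q / ((q : ℂ)⁻¹ - q) ^ 2 := by
    rw [ha, div_mul_div_comm, ← Complex.ofReal_mul, Real.mul_self_sqrt hq0.le, sq]
  have hEF : E * F + F * E = (a * a) • (y * (x' * yh) + x' * yh * y) := by
    rw [hE, hF, smul_mul_smul_comm, smul_mul_smul_comm, smul_add]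
  rw [hEF, ha2, mul_inv_mul_add_inv_mul_mul_of_hyperboloid hq c₀ d₀ hxx' hx'x h1 h3 h4, hcd, one_smul]
  match_scalars <;> field_simp <;> ring

/-- the quantum moment map sends the quantum quadratic Casimir
element of `U_q(sl(2))` to the scalar `(c₀ + d₀ − q − q⁻¹)/(q⁻¹ − q)²` in the
quantum algebra of functions on the quantum hyperboloid `X_{c₀,d₀}`. -/
theorem quantum_moment_map_casimir
    (q : ℝ) (hq0 : 0 < q) (hq1 : q < 1)
    (c₀ d₀ : ℂ) (hcd : c₀ * d₀ = 1)
    (A : Type*) [Ring A] [Algebra ℂ A]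
    (x x' y yh : A)
    (hxx' : x * x' = 1) (hx'x : x' * x = 1)
    (h1 : y * x = ((q : ℂ) ^ 2) • (x * y))
    (h2 : yh * x = ((q : ℂ) ^ 2)⁻¹ • (x * yh))
    (h3 : yh * y = -((((q : ℂ))⁻¹ • x - c₀ • (1 : A)) * (((q : ℂ))⁻¹ • x - d₀ • (1 : A))))
    (h4 : y * yh = -(((q : ℂ) • x - c₀ • (1 : A)) * ((q : ℂ) • x - d₀ • (1 : A))))
    (a : ℂ) (ha : a = (Real.sqrt q : ℂ) / (((q : ℂ))⁻¹ - (q : ℂ)))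
    (E F : A) (hE : E = a • y) (hF : F = a • (x' * yh)) :
    (1 / 2 : ℂ) • (E * F + F * E) +
        ((((q : ℂ))⁻¹ + (q : ℂ)) / (2 * (((q : ℂ))⁻¹ - (q : ℂ)) ^ 2)) •
          (x - (2 : ℂ) • (1 : A) + x') =
      ((c₀ + d₀ - (q : ℂ) - ((q : ℂ))⁻¹) / ((((q : ℂ))⁻¹ - (q : ℂ)) ^ 2)) • (1 : A) :=
  quantum_moment_map_casimir_general q hq0 c₀ d₀ hcd A x x' y yh hxx' hx'x h1 h3 h4 a ha E F hE hF
end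

section
/- Let q be a real number with 0 < q < 1, ν₀ a nonzero real number, and c₀, d₀ complex numbers such that ν₀ q^{2k} ≠ q c₀ and ν₀ q^{2k} ≠ q d₀ for all k ∈ ℤ. On the ℂ-vector space of Laurent polynomials in ζ over ℂ, define X(ζ^k) = ν₀ q^{-2k} ζ^k, Z = multiplication by ζ, Z' = multiplication by ζ^{-1}, Y = Z∘(q^{-1}X − c₀·id), and Ŷ = −Z'∘(qX − d₀·id). Then the only ℂ-linear subspaces of the Laurent polynomials that are invariant under all three operators X, Y, Ŷ are the zero subspace and the whole space. -/
/-!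
`X` is diagonal in the monomial basis with pairwise distinct eigenvalues `ν₀ q^{-2k}`, so a nonzero
`X`-invariant subspace contains some monomial `T k`. The hypotheses on `c₀` and `d₀` say exactly
that `Y` and `Ŷ` send `T k` to nonzero multiples of `T (k + 1)` and `T (k - 1)`, so the subspace
then contains every monomial.
-/

open LaurentPolynomial

noncomputable def LaurentPolynomial.basisT (R : Type*) [Semiring R] : Module.Basis ℤ R R[T;T⁻¹] :=
  AddMonoidAlgebra.basis ℤ R

@[simp]
theorem LaurentPolynomial.basisT_apply (R : Type*) [Semiring R] (k : ℤ) : basisT R k = T k :=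
  rfl

section Eigenvectors

variable {K V ι : Type*} [Field K] [AddCommGroup V] [Module K V]
  {X : V →ₗ[K] V} {p : Submodule K V} {e : ι → V} {μ : ι → K}

theorem Submodule.smul_mem_of_sum_smul_mem_of_injective_eigenvalues [DecidableEq ι]
    (hp : ∀ v ∈ p, X v ∈ p) (hX : ∀ i, X (e i) = μ i • e i) (hμ : Function.Injective μ)
    (s : Finset ι) (c : ι → K) (hs : ∑ j ∈ s, c j • e j ∈ p) : ∀ i ∈ s, c i • e i ∈ p := by
  induction s using Finset.induction_on generalizing c with
  | empty => simp
  | insert a s has ih =>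
    rw [Finset.sum_insert has] at hs
    -- `X - μ a` kills the `a`-component and rescales the others by nonzero factors.
    have hrest : ∑ j ∈ s, ((μ j - μ a) * c j) • e j ∈ p := by
      convert p.sub_mem (hp _ hs) (p.smul_mem (μ a) hs) using 1
      simp only [map_add, map_sum, map_smul, hX, smul_add, Finset.smul_sum, smul_smul, sub_mul,
        sub_smul, Finset.sum_sub_distrib, mul_comm (c _)]
      abel
    have hs' : ∀ i ∈ s, c i • e i ∈ p := fun i hi => by
      have hne : μ i - μ a ≠ 0 := sub_ne_zero.2 (hμ.ne (ne_of_mem_of_not_mem hi has))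
      simpa only [← smul_smul, p.smul_mem_iff hne] using ih _ hrest i hi
    intro i hi
    rcases Finset.mem_insert.1 hi with rfl | hi
    · simpa using p.sub_mem hs (p.sum_mem hs')
    · exact hs' i hi

theorem Module.Basis.exists_mem_of_injective_eigenvalues (b : Module.Basis ι K V)
    (hp : ∀ v ∈ p, X v ∈ p) (hX : ∀ i, X (b i) = μ i • b i) (hμ : Function.Injective μ)
    (hne : p ≠ ⊥) : ∃ i, b i ∈ p := by
  classical
  obtain ⟨v, hv, hv0⟩ := p.ne_bot_iff.1 hne
  obtain ⟨i, hi⟩ := Finsupp.support_nonempty_iff.2 ((b.repr.map_ne_zero_iff).2 hv0)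
  have hsum : ∑ j ∈ (b.repr v).support, b.repr v j • b j ∈ p := by
    rwa [← b.linearCombination_repr v, Finsupp.linearCombination_apply] at hv
  refine ⟨i, (p.smul_mem_iff (Finsupp.mem_support_iff.1 hi)).1 ?_⟩
  exact p.smul_mem_of_sum_smul_mem_of_injective_eigenvalues hp hX hμ _ _ hsum i hi

end Eigenvectors

theorem LaurentPolynomial.mul_T_comp_smul_sub_smul_id_apply_T {R : Type*} [CommRing R]
    {X Z : R[T;T⁻¹] →ₗ[R] R[T;T⁻¹]} {μ : ℤ → R} (hX : ∀ k, X (T k) = μ k • T k) {n : ℤ}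
    (hZ : ∀ f, Z f = T n * f) (a c : R) (k : ℤ) :
    (Z ∘ₗ (a • X - c • LinearMap.id)) (T k) = (a * μ k - c) • T (n + k) := by
  simp only [LinearMap.comp_apply, LinearMap.sub_apply, LinearMap.smul_apply, LinearMap.id_apply,
    hX, smul_smul, ← sub_smul, hZ, mul_smul_comm, T_add]

theorem injective_mul_zpow_neg_two_mul {q : ℝ} (hq0 : 0 < q) (hq1 : q ≠ 1) {ν : ℝ} (hν : ν ≠ 0) :
    Function.Injective fun k : ℤ => (ν : ℂ) * (q : ℂ) ^ (-(2 * k)) := by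
  intro j k h
  have h' : ν * q ^ (-(2 * j)) = ν * q ^ (-(2 * k)) :=
    Complex.ofReal_injective (by push_cast; exact h)
  have := zpow_right_injective₀ hq0 hq1 (mul_left_cancel₀ hν h')
  omega

/-- under the non-truncation hypotheses `ν₀q^{2k} ≠ qc₀, qd₀`, the
only subspaces of the Laurent polynomials invariant under the operators `X`,
`Y`, `Ŷ` realizing the quantum hyperboloid module `Π_ν` are `⊥` and `⊤`. -/
theorem quantum_hyperboloid_module_simple
    (q : ℝ) (hq0 : 0 < q) (hq1 : q < 1)
    (ν₀ : ℝ) (hν : ν₀ ≠ 0) (c₀ d₀ : ℂ)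
    (hc : ∀ k : ℤ, (ν₀ : ℂ) * (q : ℂ) ^ (2 * k) ≠ (q : ℂ) * c₀)
    (hd : ∀ k : ℤ, (ν₀ : ℂ) * (q : ℂ) ^ (2 * k) ≠ (q : ℂ) * d₀)
    (X Z Z' Y Yh : LaurentPolynomial ℂ →ₗ[ℂ] LaurentPolynomial ℂ)
    (hX : ∀ k : ℤ, X (T k) = ((ν₀ : ℂ) * (q : ℂ) ^ (-(2 * k))) • T k)
    (hZ : ∀ f : LaurentPolynomial ℂ, Z f = T 1 * f)
    (hZ' : ∀ f : LaurentPolynomial ℂ, Z' f = T (-1) * f)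
    (hY : Y = Z ∘ₗ (((q : ℂ))⁻¹ • X - c₀ • LinearMap.id))
    (hYh : Yh = -(Z' ∘ₗ ((q : ℂ) • X - d₀ • LinearMap.id))) :
    ∀ p : Submodule ℂ (LaurentPolynomial ℂ),
      (∀ f ∈ p, X f ∈ p) → (∀ f ∈ p, Y f ∈ p) → (∀ f ∈ p, Yh f ∈ p) →
      p = ⊥ ∨ p = ⊤ := by
  intro p hXp hYp hYhp
  refine or_iff_not_imp_left.2 fun hne => ?_
  have hq : (q : ℂ) ≠ 0 := by exact_mod_cast hq0.ne'
  obtain ⟨k, hk⟩ := (basisT ℂ).exists_mem_of_injective_eigenvalues hXp (by simpa using hX)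
    (injective_mul_zpow_neg_two_mul hq0 hq1.ne hν) hne
  have hup : ∀ j, T j ∈ p → T (j + 1) ∈ p := fun j hj => by
    have hc' : (q : ℂ)⁻¹ * (ν₀ * (q : ℂ) ^ (-(2 * j))) - c₀ ≠ 0 := fun h => hc (-j) <| by
      rw [sub_eq_zero, inv_mul_eq_iff_eq_mul₀ hq] at h
      rwa [mul_neg]
    have := hYp _ hj
    rwa [hY, mul_T_comp_smul_sub_smul_id_apply_T hX hZ, p.smul_mem_iff hc', add_comm] at this
  have hdown : ∀ j, T j ∈ p → T (j - 1) ∈ p := fun j hj => by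
    have hd' : (q : ℂ) * (ν₀ * (q : ℂ) ^ (-(2 * j))) - d₀ ≠ 0 := fun h => hd (1 - j) <| by
      rw [← sub_eq_zero.1 h, show 2 * (1 - j) = 1 + (1 + -(2 * j)) by ring, zpow_add₀ hq,
        zpow_add₀ hq, zpow_one]
      ring
    have := hYhp _ hj
    rwa [hYh, LinearMap.neg_apply, mul_T_comp_smul_sub_smul_id_apply_T hX hZ', p.neg_mem_iff,
      p.smul_mem_iff hd', neg_add_eq_sub] at this
  have hall : ∀ m, T m ∈ p := fun m =>
    Int.inductionOn' m k hk (fun j _ => hup j) (fun j _ => hdown j)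
  rw [eq_top_iff, ← (basisT ℂ).span_eq, Submodule.span_le]
  rintro _ ⟨m, rfl⟩
  simpa using hall m
end

section
/- Let q be a real number with 0 < q < 1, let c₀, d₀ be real numbers with 0 < c₀ ≤ d₀ and c₀ d₀ = 1, and let ν₀ be a nonzero real number with ν₀ q^{2k} ≠ q c₀ and ν₀ q^{2k} ≠ q d₀ for all k ∈ ℤ. On the ℂ-vector space of Laurent polynomials in ζ over ℂ, define X(ζ^k) = ν₀ q^{-2k} ζ^k, Z = multiplication by ζ, Y = Z∘(q^{-1}X − c₀·id), and Ŷ = −Z^{-1}∘(qX − d₀·id) where Z^{-1} is multiplication by ζ^{-1}. Then there exists a positive-definite Hermitian inner product ⟨·,·⟩ on the Laurent polynomials satisfying ⟨X f, g⟩ = ⟨f, X g⟩ and ⟨Y f, g⟩ = −⟨f, Ŷ g⟩ for all Laurent polynomials f, g, if and only if no point of the geometric progression {ν₀ q^{2k} : k ∈ ℤ} lies in the open interval (q c₀, q d₀). -/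
/-!
On the monomials `T n` the operators are weighted shifts: `X` is diagonal with real eigenvalues
`λₙ = ν₀ q^{-2n}`, `Y` raises the degree with weight `αₙ = q⁻¹λₙ - c₀` and `Ŷ` lowers it with
weight `βₙ = d₀ - qλₙ`. Pairing `Y Tₙ` with `Tₙ₊₁` in any admissible inner product gives
`αₙ ‖Tₙ₊₁‖² = -βₙ₊₁ ‖Tₙ‖²`, so `αₙ βₙ₊₁ < 0` is necessary. Conversely, if it holds, the monomials
are made orthogonal with `‖Tₙ₊₁‖² / ‖Tₙ‖² = -βₙ₊₁ / αₙ`, and this inner product works. Finally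
`βₙ₊₁ = d₀ - q⁻¹λₙ`, so `αₙ βₙ₊₁ = (μ - c₀)(d₀ - μ)` with `μ = q⁻¹λₙ`, which is negative exactly
when `λₙ ∉ [qc₀, qd₀]`.
-/

open LaurentPolynomial
open scoped lp ComplexConjugate

theorem exists_pos_seq_add_one_eq_mul {K : Type*} [Field K] [LinearOrder K]
    [IsStrictOrderedRing K] (r : ℤ → K) (hr : ∀ k, 0 < r k) :
    ∃ w : ℤ → K, (∀ k, 0 < w k) ∧ ∀ k, w (k + 1) = r k * w k := by
  refine ⟨fun k => (∏ j ∈ Finset.Ico 0 k, r j) / ∏ j ∈ Finset.Ico k 0, r j,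
    fun k => div_pos (Finset.prod_pos fun j _ => hr j) (Finset.prod_pos fun j _ => hr j),
    fun k => ?_⟩
  dsimp only
  rcases le_or_gt 0 k with hk | hk
  · simp only [Finset.Ico_eq_empty_of_le hk, Finset.Ico_eq_empty_of_le (by omega : 0 ≤ k + 1),
      Finset.prod_empty, div_one, ← Finset.prod_Ico_mul_eq_prod_Ico_add_one hk, mul_comm]
  · have := (hr k).ne'
    rw [Finset.Ico_eq_empty_of_le (by omega : k + 1 ≤ 0), Finset.Ico_eq_empty_of_le hk.le,
      ← Finset.insert_Ico_add_one_left_eq_Ico hk, Finset.prod_insert (by simp)]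
    field_simp

theorem sub_mul_sub_neg_iff_notMem_Ioo {K : Type*} [Field K] [LinearOrder K]
    [IsStrictOrderedRing K] {x c d : K} (hcd : c ≤ d) (hc : x ≠ c) (hd : x ≠ d) :
    (x - c) * (d - x) < 0 ↔ x ∉ Set.Ioo c d := by
  constructor
  · rintro h ⟨hcx, hxd⟩
    exact h.not_ge (mul_pos (sub_pos.2 hcx) (sub_pos.2 hxd)).le
  · intro hx
    rcases hc.lt_or_gt with hxc | hcx
    · exact mul_neg_of_neg_of_pos (sub_neg.2 hxc) (sub_pos.2 (hxc.trans_le hcd))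
    · exact mul_neg_of_pos_of_neg (sub_pos.2 hcx)
        (sub_neg.2 ((not_lt.1 fun hxd => hx ⟨hcx, hxd⟩).lt_of_ne' hd))

namespace LaurentPolynomial

noncomputable def weightedCoeffs (w : ℤ → ℝ) : ℂ[T;T⁻¹] →ₗ[ℂ] ℓ²(ℤ, ℂ) where
  toFun f := ⟨fun k => (√(w k) : ℂ) * f.coeff k, (memℓp_zero <|
    f.coeff.support.finite_toSet.subset fun k hk => by simp_all).of_exponent_ge zero_le⟩
  map_add' f g := lp.ext <| funext fun k => mul_add _ _ _
  map_smul' a f := lp.ext <| funext fun k => mul_left_comm _ _ _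

theorem weightedCoeffs_apply (w : ℤ → ℝ) (f : ℂ[T;T⁻¹]) (k : ℤ) :
    weightedCoeffs w f k = (√(w k) : ℂ) * f.coeff k := rfl

theorem weightedCoeffs_T (w : ℤ → ℝ) (n : ℤ) :
    weightedCoeffs w (T n) = lp.single 2 n (√(w n) : ℂ) :=
  lp.ext <| funext fun k => by
    rw [weightedCoeffs_apply, lp.single_apply, T_apply, Pi.single_apply]
    split_ifs <;> simp_all [eq_comm]

/-- `⟨f, g⟩ = ∑ₖ wₖ fₖ conj gₖ`, pulled back from `ℓ²`; the arguments of Mathlib's inner product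
(conjugate-linear in the first slot) are swapped. -/
noncomputable def weightedInner (w : ℤ → ℝ) : ℂ[T;T⁻¹] →ₗ[ℂ] ℂ[T;T⁻¹] →ₗ⋆[ℂ] ℂ :=
  ((innerₛₗ ℂ).flip ∘ₗ weightedCoeffs w).compl₂ (weightedCoeffs w)

theorem weightedInner_apply (w : ℤ → ℝ) (f g : ℂ[T;T⁻¹]) :
    weightedInner w f g = inner ℂ (weightedCoeffs w g) (weightedCoeffs w f) := rfl

theorem conj_weightedInner (w : ℤ → ℝ) (f g : ℂ[T;T⁻¹]) :
    conj (weightedInner w g f) = weightedInner w f g := by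
  rw [weightedInner_apply, weightedInner_apply, inner_conj_symm]

theorem weightedInner_T_T {w : ℤ → ℝ} (hw : ∀ k, 0 ≤ w k) (m n : ℤ) :
    weightedInner w (T m) (T n) = if m = n then (w m : ℂ) else 0 := by
  rw [weightedInner_apply, weightedCoeffs_T, weightedCoeffs_T, lp.inner_single_left,
    lp.single_apply, Pi.single_apply]
  split_ifs with h h' h'
  · subst h
    simp [← Complex.ofReal_pow, Real.sq_sqrt (hw _)]
  all_goals simp_all [eq_comm]

theorem weightedInner_self_re_pos {w : ℤ → ℝ} (hw : ∀ k, 0 < w k) {f : ℂ[T;T⁻¹]} (hf : f ≠ 0) :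
    0 < (weightedInner w f f).re := by
  rw [weightedInner_apply]
  change 0 < RCLike.re (inner ℂ _ _)
  rw [inner_self_eq_norm_sq]
  obtain ⟨k, hk⟩ : ∃ k, f.coeff k ≠ 0 := by
    by_contra! h
    exact hf (AddMonoidAlgebra.coeff_eq_zero.1 (Finsupp.ext h))
  refine pow_pos (norm_pos_iff.2 fun h0 => hk ?_) 2
  simpa only [weightedCoeffs_apply, lp.coeFn_zero, Pi.zero_apply, mul_eq_zero,
    Complex.ofReal_eq_zero, Real.sqrt_eq_zero', not_le.2 (hw k), false_or]
    using congrArg (fun g : ℓ²(ℤ, ℂ) => g k) h0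

theorem weightedInner_map_eq_of_shift {w : ℤ → ℝ} (hw : ∀ k, 0 ≤ w k)
    {A B : ℂ[T;T⁻¹] →ₗ[ℂ] ℂ[T;T⁻¹]} {α β : ℤ → ℝ} {s : ℤ}
    (hA : ∀ n, A (T n) = (α n : ℂ) • T (n + s)) (hB : ∀ n, B (T n) = (β n : ℂ) • T (n - s))
    (h : ∀ n, α n * w (n + s) = β (n + s) * w n) (f g : ℂ[T;T⁻¹]) :
    weightedInner w (A f) g = weightedInner w f (B g) := by
  suffices weightedInner w ∘ₗ A = (weightedInner w).compl₂ B from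
    LinearMap.congr_fun₂ this f g
  refine LinearMap.ext_basis (AddMonoidAlgebra.basis ℤ ℂ) (AddMonoidAlgebra.basis ℤ ℂ)
    fun m n => ?_
  change weightedInner w (A (T m)) (T n) = weightedInner w (T m) (B (T n))
  rw [hA, hB, LinearMap.map_smulₛₗ₂, LinearMap.map_smulₛₗ, weightedInner_T_T hw,
    weightedInner_T_T hw, RingHom.id_apply, Complex.conj_ofReal]
  by_cases hmn : m + s = n
  · subst hmn
    simp only [add_sub_cancel_right, if_true, smul_eq_mul]
    exact_mod_cast h m
  · rw [if_neg hmn, if_neg (by omega), smul_zero, smul_zero]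

theorem mul_neg_of_inner_adjoint_neg {inner : ℂ[T;T⁻¹] → ℂ[T;T⁻¹] → ℂ}
    (herm : ∀ f g, inner f g = conj (inner g f))
    (hsmul : ∀ (a : ℂ) f g, inner (a • f) g = a * inner f g)
    (hpos : ∀ f, f ≠ 0 → 0 < (inner f f).re)
    {Y Y' : ℂ[T;T⁻¹] →ₗ[ℂ] ℂ[T;T⁻¹]} {α β : ℤ → ℝ}
    (hY : ∀ n, Y (T n) = (α n : ℂ) • T (n + 1)) (hY' : ∀ n, Y' (T n) = (β n : ℂ) • T (n - 1))
    (hα : ∀ n, α n ≠ 0) (hadj : ∀ f g, inner (Y f) g = -inner f (Y' g)) (n : ℤ) :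
    α n * β (n + 1) < 0 := by
  have hp : ∀ k, 0 < (inner (T k) (T k)).re := fun k => hpos _ (isUnit_T k).ne_zero
  have key := hadj (T n) (T (n + 1))
  rw [hY, hY', add_sub_cancel_right, hsmul, herm (T n), hsmul, map_mul, ← herm,
    Complex.conj_ofReal] at key
  have hre : α n * (inner (T (n + 1)) (T (n + 1))).re =
      -(β (n + 1) * (inner (T n) (T n)).re) := by
    simpa using congrArg Complex.re key
  have hβ : β (n + 1) ≠ 0 := by
    rintro h0
    rw [h0, zero_mul, neg_zero] at hre
    exact mul_ne_zero (hα n) (hp _).ne' hre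
  refine neg_of_mul_neg_left (b := (inner (T (n + 1)) (T (n + 1))).re) ?_ (hp _).le
  calc α n * β (n + 1) * (inner (T (n + 1)) (T (n + 1))).re
      = -(β (n + 1) ^ 2 * (inner (T n) (T n)).re) := by linear_combination β (n + 1) * hre
    _ < 0 := neg_neg_of_pos (mul_pos (sq_pos_of_ne_zero hβ) (hp n))

theorem exists_inner_symm_adjoint_neg_iff {X Y Y' : ℂ[T;T⁻¹] →ₗ[ℂ] ℂ[T;T⁻¹]} {l α β : ℤ → ℝ}
    (hX : ∀ n, X (T n) = (l n : ℂ) • T n) (hY : ∀ n, Y (T n) = (α n : ℂ) • T (n + 1))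
    (hY' : ∀ n, Y' (T n) = (β n : ℂ) • T (n - 1)) (hα : ∀ n, α n ≠ 0) :
    (∃ inner : ℂ[T;T⁻¹] → ℂ[T;T⁻¹] → ℂ,
      (∀ f g, inner f g = conj (inner g f)) ∧
      (∀ (a : ℂ) f g, inner (a • f) g = a * inner f g) ∧
      (∀ f₁ f₂ g, inner (f₁ + f₂) g = inner f₁ g + inner f₂ g) ∧
      (∀ f, f ≠ 0 → 0 < (inner f f).re) ∧
      (∀ f g, inner (X f) g = inner f (X g)) ∧
      (∀ f g, inner (Y f) g = -inner f (Y' g))) ↔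
    ∀ n, α n * β (n + 1) < 0 := by
  constructor
  · rintro ⟨inner, herm, hsmul, -, hpos, -, hadj⟩
    exact mul_neg_of_inner_adjoint_neg herm hsmul hpos hY hY' hα hadj
  · intro hneg
    -- the ratio `-β (n + 1) / α n`, written so that its positivity is visible
    obtain ⟨w, hw, hrec⟩ := exists_pos_seq_add_one_eq_mul
      (fun n => -(α n * β (n + 1)) / α n ^ 2)
      fun n => div_pos (neg_pos.2 (hneg n)) (sq_pos_of_ne_zero (hα n))
    have hw' : ∀ k, 0 ≤ w k := fun k => (hw k).le
    refine ⟨fun f g => weightedInner w f g, fun f g => (conj_weightedInner w f g).symm,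
      fun a f g => by simp, fun f₁ f₂ g => by simp, fun f hf => weightedInner_self_re_pos hw hf,
      weightedInner_map_eq_of_shift (s := 0) hw' (by simpa using hX) (by simpa using hX)
        (by simp), fun f g => ?_⟩
    rw [← map_neg, ← LinearMap.neg_apply]
    refine weightedInner_map_eq_of_shift (β := fun n => -β n) hw' hY (fun n => ?_)
      (fun n => ?_) f g
    · simp [hY']
    · rw [hrec]
      field_simp [hα n]

end LaurentPolynomial

theorem quantum_hyperboloid_unitarizable_iff_general
    (q : ℝ) (hq0 : 0 < q)
    (c₀ d₀ : ℝ) (hcd : c₀ ≤ d₀)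
    (ν₀ : ℝ)
    (h1 : ∀ k : ℤ, ν₀ * q ^ (2 * k) ≠ q * c₀)
    (h2 : ∀ k : ℤ, ν₀ * q ^ (2 * k) ≠ q * d₀)
    (X Z Z' Y Yh : LaurentPolynomial ℂ →ₗ[ℂ] LaurentPolynomial ℂ)
    (hX : ∀ k : ℤ, X (T k) = ((ν₀ : ℂ) * (q : ℂ) ^ (-(2 * k))) • T k)
    (hZ : ∀ f : LaurentPolynomial ℂ, Z f = T 1 * f)
    (hZ' : ∀ f : LaurentPolynomial ℂ, Z' f = T (-1) * f)
    (hY : Y = Z ∘ₗ (((q : ℂ))⁻¹ • X - (c₀ : ℂ) • LinearMap.id))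
    (hYh : Yh = -(Z' ∘ₗ ((q : ℂ) • X - (d₀ : ℂ) • LinearMap.id))) :
    (∃ inner : LaurentPolynomial ℂ → LaurentPolynomial ℂ → ℂ,
      (∀ f g, inner f g = starRingEnd ℂ (inner g f)) ∧
      (∀ (a : ℂ) f g, inner (a • f) g = a * inner f g) ∧
      (∀ f₁ f₂ g, inner (f₁ + f₂) g = inner f₁ g + inner f₂ g) ∧
      (∀ f, f ≠ 0 → 0 < (inner f f).re) ∧
      (∀ f g, inner (X f) g = inner f (X g)) ∧
      (∀ f g, inner (Y f) g = -inner f (Yh g))) ↔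
    (∀ k : ℤ, ν₀ * q ^ (2 * k) ∉ Set.Ioo (q * c₀) (q * d₀)) := by
  have hq := hq0.ne'
  set e : ℤ → ℝ := fun n => ν₀ * q ^ (2 * -n) with he
  have hXT : ∀ n, X (T n) = (e n : ℂ) • T n := fun n => by simp [he, hX]
  have hYT : ∀ n, Y (T n) = ((q⁻¹ * e n - c₀ : ℝ) : ℂ) • T (n + 1) := fun n => by
    simp only [hY, LinearMap.comp_apply, LinearMap.sub_apply, LinearMap.smul_apply,
      LinearMap.id_apply, hXT, hZ, smul_smul, ← sub_smul, mul_smul_comm, ← T_add, add_comm 1 n,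
      Complex.ofReal_sub, Complex.ofReal_mul, Complex.ofReal_inv]
  have hYhT : ∀ n, Yh (T n) = ((d₀ - q * e n : ℝ) : ℂ) • T (n - 1) := fun n => by
    simp only [hYh, LinearMap.neg_apply, LinearMap.comp_apply, LinearMap.sub_apply,
      LinearMap.smul_apply, LinearMap.id_apply, hXT, hZ', smul_smul, ← sub_smul, mul_smul_comm,
      ← T_add, ← neg_smul, add_comm (-1) n, ← sub_eq_add_neg, neg_sub, Complex.ofReal_sub,
      Complex.ofReal_mul]
  have he_succ : ∀ n, q * e (n + 1) = q⁻¹ * e n := fun n => by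
    simp only [he]
    rw [show 2 * -(n + 1) = 2 * -n + -1 + -1 by ring, zpow_add₀ hq, zpow_add₀ hq, zpow_neg_one]
    field_simp
  have hec : ∀ n, q⁻¹ * e n ≠ c₀ := fun n h => h1 (-n) (by rw [← h, mul_inv_cancel_left₀ hq])
  have hed : ∀ n, q⁻¹ * e n ≠ d₀ := fun n h => h2 (-n) (by rw [← h, mul_inv_cancel_left₀ hq])
  rw [exists_inner_symm_adjoint_neg_iff hXT hYT hYhT fun n => sub_ne_zero.2 (hec n)]
  refine (Equiv.neg ℤ).forall_congr fun n => ?_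
  rw [he_succ, sub_mul_sub_neg_iff_notMem_Ioo hcd (hec n) (hed n)]
  simp [he, Set.mem_Ioo, lt_inv_mul_iff₀ hq0, inv_mul_lt_iff₀ hq0]

/-- the module `Π_ν` over the quantum algebra of functions on the
quantum two-sheet hyperboloid or cone `X_{c₀,d₀}` (realized on Laurent
polynomials by the operators `X`, `Y`, `Ŷ`) is unitarizable — i.e. admits a
positive-definite Hermitian inner product with `X` symmetric and `−Ŷ` adjoint
to `Y` — if and only if the geometric progression `{ν₀q^{2k}}` avoids the open
interval `(qc₀, qd₀)`. -/
theorem quantum_hyperboloid_unitarizable_iff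
    (q : ℝ) (hq0 : 0 < q) (hq1 : q < 1)
    (c₀ d₀ : ℝ) (hc : 0 < c₀) (hcd : c₀ ≤ d₀) (hcd1 : c₀ * d₀ = 1)
    (ν₀ : ℝ) (hν : ν₀ ≠ 0)
    (h1 : ∀ k : ℤ, ν₀ * q ^ (2 * k) ≠ q * c₀)
    (h2 : ∀ k : ℤ, ν₀ * q ^ (2 * k) ≠ q * d₀)
    (X Z Z' Y Yh : LaurentPolynomial ℂ →ₗ[ℂ] LaurentPolynomial ℂ)
    (hX : ∀ k : ℤ, X (T k) = ((ν₀ : ℂ) * (q : ℂ) ^ (-(2 * k))) • T k)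
    (hZ : ∀ f : LaurentPolynomial ℂ, Z f = T 1 * f)
    (hZ' : ∀ f : LaurentPolynomial ℂ, Z' f = T (-1) * f)
    (hY : Y = Z ∘ₗ (((q : ℂ))⁻¹ • X - (c₀ : ℂ) • LinearMap.id))
    (hYh : Yh = -(Z' ∘ₗ ((q : ℂ) • X - (d₀ : ℂ) • LinearMap.id))) :
    (∃ inner : LaurentPolynomial ℂ → LaurentPolynomial ℂ → ℂ,
      (∀ f g, inner f g = starRingEnd ℂ (inner g f)) ∧
      (∀ (a : ℂ) f g, inner (a • f) g = a * inner f g) ∧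
      (∀ f₁ f₂ g, inner (f₁ + f₂) g = inner f₁ g + inner f₂ g) ∧
      (∀ f, f ≠ 0 → 0 < (inner f f).re) ∧
      (∀ f g, inner (X f) g = inner f (X g)) ∧
      (∀ f g, inner (Y f) g = -inner f (Yh g))) ↔
    (∀ k : ℤ, ν₀ * q ^ (2 * k) ∉ Set.Ioo (q * c₀) (q * d₀)) :=
  quantum_hyperboloid_unitarizable_iff_general q hq0 c₀ d₀ hcd ν₀ h1 h2 X Z Z' Y Yh hX hZ hZ' hY hYh
end
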